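/- arXiv:1503.01155 — 8 statements merged into one kernel-verified Lean document; each statement's English description precedes it below -/
import Mathlib

section
/- Consider the two-locus, two-allele recombination ODE on ℝ⁴: ṗ₁ = ṗ₄ = k(p₂p₃ − p₁p₄) and ṗ₂ = ṗ₃ = k(p₁p₄ − p₂p₃), with rate constant k > 0. Along any differentiable solution p : [0,∞) → ℝ⁴_{≥0}, the linkage disequilibrium D(t) := p₁(t)p₄(t) − p₂(t)p₃(t) satisfies Ḋ = −k·D·(p₁+p₂+p₃+p₄); consequently, with s := p₁(0)+p₂(0)+p₃(0)+p₄(0) (which is conserved), D(t) = D(0)·e^{−kst} for all t ≥ 0, and in particular D(t) → 0 as t → ∞ whenever s > 0. -/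
open Filter

/-!
The recombination flow preserves the total mass `p₁ + p₂ + p₃ + p₄`, and the product rule turns
the ODE into the linear equation `Ḋ = -k s D` for the linkage disequilibrium, whose solution is
`D 0 · exp (-k s t)`: multiplying by `exp (k s t)` gives a function with zero derivative.
-/

theorem eq_apply_zero_of_hasDerivAt_zero {f : ℝ → ℝ} (hf : ∀ t, 0 ≤ t → HasDerivAt f 0 t)
    {t : ℝ} (ht : 0 ≤ t) : f t = f 0 :=
  constant_of_has_deriv_right_zero (fun x hx => (hf x hx.1).continuousAt.continuousWithinAt)
    (fun x hx => (hf x hx.1).hasDerivWithinAt) t ⟨ht, le_rfl⟩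

theorem eq_mul_exp_of_hasDerivAt_mul_self {f : ℝ → ℝ} {c : ℝ}
    (hf : ∀ t, 0 ≤ t → HasDerivAt f (c * f t) t) {t : ℝ} (ht : 0 ≤ t) :
    f t = f 0 * Real.exp (c * t) := by
  have hconst : ∀ t, 0 ≤ t → HasDerivAt (fun t => f t * Real.exp (-(c * t))) 0 t := by
    intro t ht
    have hexp : HasDerivAt (fun t => Real.exp (-(c * t))) (-c * Real.exp (-(c * t))) t := by
      simpa [mul_comm] using ((hasDerivAt_id t).const_mul c).neg.exp
    exact ((hf t ht).mul hexp).congr_deriv (by ring)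
  have key := eq_apply_zero_of_hasDerivAt_zero hconst ht
  simp only [mul_zero, neg_zero, Real.exp_zero, mul_one] at key
  rw [← key, mul_assoc, ← Real.exp_add, neg_add_cancel, Real.exp_zero, mul_one]

section Recombination

variable {k : ℝ} {p₁ p₂ p₃ p₄ : ℝ → ℝ} {t : ℝ}

theorem hasDerivAt_recombination_sum
    (h₁ : HasDerivAt p₁ (k * (p₂ t * p₃ t - p₁ t * p₄ t)) t)
    (h₄ : HasDerivAt p₄ (k * (p₂ t * p₃ t - p₁ t * p₄ t)) t)
    (h₂ : HasDerivAt p₂ (k * (p₁ t * p₄ t - p₂ t * p₃ t)) t)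
    (h₃ : HasDerivAt p₃ (k * (p₁ t * p₄ t - p₂ t * p₃ t)) t) :
    HasDerivAt (fun t => p₁ t + p₂ t + p₃ t + p₄ t) 0 t :=
  (((h₁.add h₂).add h₃).add h₄).congr_deriv (by ring)

theorem hasDerivAt_linkageDisequilibrium
    (h₁ : HasDerivAt p₁ (k * (p₂ t * p₃ t - p₁ t * p₄ t)) t)
    (h₄ : HasDerivAt p₄ (k * (p₂ t * p₃ t - p₁ t * p₄ t)) t)
    (h₂ : HasDerivAt p₂ (k * (p₁ t * p₄ t - p₂ t * p₃ t)) t)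
    (h₃ : HasDerivAt p₃ (k * (p₁ t * p₄ t - p₂ t * p₃ t)) t) :
    HasDerivAt (fun t => p₁ t * p₄ t - p₂ t * p₃ t)
      (-k * (p₁ t * p₄ t - p₂ t * p₃ t) * (p₁ t + p₂ t + p₃ t + p₄ t)) t :=
  ((h₁.mul h₄).sub (h₂.mul h₃)).congr_deriv (by ring)

end Recombination

theorem tendsto_mul_exp_neg_mul_atTop_nhds_zero (a : ℝ) {c : ℝ} (hc : 0 < c) :
    Tendsto (fun t => a * Real.exp (-(c * t))) atTop (nhds 0) := by
  simpa using (Real.tendsto_exp_neg_atTop_nhds_zero.comp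
    (tendsto_id.const_mul_atTop hc)).const_mul a

theorem linkage_disequilibrium_decay_general
    (k : ℝ) (hk : 0 < k) (p₁ p₂ p₃ p₄ : ℝ → ℝ)
    (h₁ : ∀ t, 0 ≤ t → HasDerivAt p₁ (k * (p₂ t * p₃ t - p₁ t * p₄ t)) t)
    (h₄ : ∀ t, 0 ≤ t → HasDerivAt p₄ (k * (p₂ t * p₃ t - p₁ t * p₄ t)) t)
    (h₂ : ∀ t, 0 ≤ t → HasDerivAt p₂ (k * (p₁ t * p₄ t - p₂ t * p₃ t)) t)
    (h₃ : ∀ t, 0 ≤ t → HasDerivAt p₃ (k * (p₁ t * p₄ t - p₂ t * p₃ t)) t)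
    (D : ℝ → ℝ) (hD : D = fun t => p₁ t * p₄ t - p₂ t * p₃ t)
    (s : ℝ) (hs : s = p₁ 0 + p₂ 0 + p₃ 0 + p₄ 0) :
    (∀ t, 0 ≤ t → p₁ t + p₂ t + p₃ t + p₄ t = s) ∧
    (∀ t, 0 ≤ t → HasDerivAt D (-k * D t * (p₁ t + p₂ t + p₃ t + p₄ t)) t) ∧
    (∀ t, 0 ≤ t → D t = D 0 * Real.exp (-(k * s * t))) ∧
    (0 < s → Tendsto D atTop (nhds 0)) := by
  have hsum : ∀ t, 0 ≤ t → p₁ t + p₂ t + p₃ t + p₄ t = s := fun t ht =>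
    hs ▸ eq_apply_zero_of_hasDerivAt_zero (fun t ht => hasDerivAt_recombination_sum
      (h₁ t ht) (h₄ t ht) (h₂ t ht) (h₃ t ht)) ht
  have hDeriv : ∀ t, 0 ≤ t → HasDerivAt D (-k * D t * (p₁ t + p₂ t + p₃ t + p₄ t)) t :=
    fun t ht => hD ▸ hasDerivAt_linkageDisequilibrium (h₁ t ht) (h₄ t ht) (h₂ t ht) (h₃ t ht)
  have hform : ∀ t, 0 ≤ t → D t = D 0 * Real.exp (-(k * s * t)) := fun t ht => by
    rw [← neg_mul, eq_mul_exp_of_hasDerivAt_mul_self (c := -(k * s))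
      (fun t ht => (hDeriv t ht).congr_deriv (by rw [hsum t ht]; ring)) ht]
  refine ⟨hsum, hDeriv, hform, fun hs => ?_⟩
  refine (tendsto_mul_exp_neg_mul_atTop_nhds_zero (D 0) (mul_pos hk hs)).congr' ?_
  filter_upwards [eventually_ge_atTop 0] with t ht
  exact (hform t ht).symm

/-- **Two-locus, two-allele recombination: linkage disequilibrium decays exponentially.**
For the ODE `ṗ₁ = ṗ₄ = k(p₂p₃ − p₁p₄)`, `ṗ₂ = ṗ₃ = k(p₁p₄ − p₂p₃)` with `k > 0`,
along a differentiable nonnegative solution on `[0,∞)`, the linkage disequilibrium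
`D = p₁p₄ − p₂p₃` satisfies `Ḋ = −k·D·(p₁+p₂+p₃+p₄)`; the total sum `s` is conserved,
`D t = D 0 · exp(−k s t)` for `t ≥ 0`, and `D → 0` as `t → ∞` whenever `s > 0`. -/
theorem linkage_disequilibrium_decay
    (k : ℝ) (hk : 0 < k) (p₁ p₂ p₃ p₄ : ℝ → ℝ)
    (hnn : ∀ t, 0 ≤ t → 0 ≤ p₁ t ∧ 0 ≤ p₂ t ∧ 0 ≤ p₃ t ∧ 0 ≤ p₄ t)
    (h₁ : ∀ t, 0 ≤ t → HasDerivAt p₁ (k * (p₂ t * p₃ t - p₁ t * p₄ t)) t)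
    (h₄ : ∀ t, 0 ≤ t → HasDerivAt p₄ (k * (p₂ t * p₃ t - p₁ t * p₄ t)) t)
    (h₂ : ∀ t, 0 ≤ t → HasDerivAt p₂ (k * (p₁ t * p₄ t - p₂ t * p₃ t)) t)
    (h₃ : ∀ t, 0 ≤ t → HasDerivAt p₃ (k * (p₁ t * p₄ t - p₂ t * p₃ t)) t)
    (D : ℝ → ℝ) (hD : D = fun t => p₁ t * p₄ t - p₂ t * p₃ t)
    (s : ℝ) (hs : s = p₁ 0 + p₂ 0 + p₃ 0 + p₄ 0) :
    (∀ t, 0 ≤ t → p₁ t + p₂ t + p₃ t + p₄ t = s) ∧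
    (∀ t, 0 ≤ t → HasDerivAt D (-k * D t * (p₁ t + p₂ t + p₃ t + p₄ t)) t) ∧
    (∀ t, 0 ≤ t → D t = D 0 * Real.exp (-(k * s * t))) ∧
    (0 < s → Tendsto D atTop (nhds 0)) :=
  linkage_disequilibrium_decay_general k hk p₁ p₂ p₃ p₄ h₁ h₄ h₂ h₃ D hD s hs
end

section
/- Consider the two-locus, two-allele recombination ODE on ℝ⁴: ṗ₁ = ṗ₄ = k(p₂p₃ − p₁p₄) and ṗ₂ = ṗ₃ = k(p₁p₄ − p₂p₃), with k > 0. Every differentiable solution p : [0,∞) → ℝ⁴_{≥0} converges, as t → ∞, to a point q ∈ ℝ⁴_{≥0} satisfying q₁q₄ = q₂q₃ (a detailed-balancing equilibrium); moreover q is the unique point of ℝ⁴_{≥0} with q₁q₄ = q₂q₃ that satisfies the conservation relations q₁+q₂ = p₁(0)+p₂(0), q₁+q₃ = p₁(0)+p₃(0), and q₁+q₂+q₃+q₄ = p₁(0)+p₂(0)+p₃(0)+p₄(0), provided this total sum is positive. -/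
/-!
The sums `p₁ + p₂`, `p₁ + p₃` and `p₂ + p₄` have zero derivative, so the allele frequencies
`a = p₁ + p₂`, `b = p₁ + p₃` and the total mass `s` are conserved. For a point with these
marginals, `p₁p₄ − p₂p₃ = s p₁ − ab`; hence `p₁` solves the linear equation
`ṗ₁ = k (ab − s p₁)` and converges exponentially fast to `ab / s`, and the other coordinates
follow from the conservation laws. The same identity shows that a point in detailed balance is
determined by its marginals once `s ≠ 0`.
-/

open Filter Topology

theorem eq_of_hasDerivAt_eq_zero_of_le {f : ℝ → ℝ} {t₀ : ℝ}
    (hf : ∀ t, t₀ ≤ t → HasDerivAt f 0 t) {t : ℝ} (ht : t₀ ≤ t) : f t = f t₀ :=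
  constant_of_has_deriv_right_zero (fun x hx => (hf x hx.1).continuousAt.continuousWithinAt)
    (fun x hx => (hf x hx.1).hasDerivWithinAt) t ⟨ht, le_rfl⟩

theorem add_eq_add_of_hasDerivAt {f g d e : ℝ → ℝ} {t₀ : ℝ}
    (hf : ∀ t, t₀ ≤ t → HasDerivAt f (d t) t) (hg : ∀ t, t₀ ≤ t → HasDerivAt g (e t) t)
    (hde : ∀ t, d t + e t = 0) {t : ℝ} (ht : t₀ ≤ t) : f t + g t = f t₀ + g t₀ :=
  eq_of_hasDerivAt_eq_zero_of_le (fun u hu => ((hf u hu).add (hg u hu)).congr_deriv (hde u)) ht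

theorem tendsto_of_hasDerivAt_eq_mul_sub {f : ℝ → ℝ} {c L : ℝ} (hc : 0 < c)
    (hf : ∀ t, 0 ≤ t → HasDerivAt f (c * (L - f t)) t) : Tendsto f atTop (𝓝 L) := by
  have hconst : ∀ t, 0 ≤ t → (f t - L) * Real.exp (c * t) = f 0 - L := fun t ht => by
    simpa using eq_of_hasDerivAt_eq_zero_of_le (f := fun u => (f u - L) * Real.exp (c * u))
      (fun u hu => (((hf u hu).sub_const L).mul ((hasDerivAt_id u).const_mul c).exp).congr_deriv
        (by ring)) ht
  have hsol : ∀ t, 0 ≤ t → f t = L + (f 0 - L) * Real.exp (-(c * t)) := fun t ht => by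
    rw [← hconst t ht, mul_assoc, ← Real.exp_add, add_neg_cancel, Real.exp_zero]
    ring
  have hdecay : Tendsto (fun t => Real.exp (-(c * t))) atTop (𝓝 0) :=
    Real.tendsto_exp_neg_atTop_nhds_zero.comp (tendsto_id.const_mul_atTop hc)
  simpa using (tendsto_const_nhds.add (tendsto_const_nhds.mul hdecay)).congr'
    ((eventually_ge_atTop 0).mono fun t ht => (hsol t ht).symm)

theorem mul_sub_mul_eq_of_add_eq {R : Type*} [CommRing R] {r₁ r₂ r₃ r₄ a b s : R}
    (h₁₂ : r₁ + r₂ = a) (h₁₃ : r₁ + r₃ = b) (hs : r₁ + r₂ + r₃ + r₄ = s) :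
    r₁ * r₄ - r₂ * r₃ = r₁ * s - a * b := by
  subst h₁₂ h₁₃ hs
  ring

theorem mul_eq_mul_iff_of_add_eq {R : Type*} [CommRing R] {r₁ r₂ r₃ r₄ a b s : R}
    (h₁₂ : r₁ + r₂ = a) (h₁₃ : r₁ + r₃ = b) (hs : r₁ + r₂ + r₃ + r₄ = s) :
    r₁ * r₄ = r₂ * r₃ ↔ r₁ * s = a * b := by
  rw [← sub_eq_zero, mul_sub_mul_eq_of_add_eq h₁₂ h₁₃ hs, sub_eq_zero]

structure IsRecombinationSolution (k : ℝ) (p₁ p₂ p₃ p₄ : ℝ → ℝ) : Prop where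
  nonneg : ∀ t, 0 ≤ t → 0 ≤ p₁ t ∧ 0 ≤ p₂ t ∧ 0 ≤ p₃ t ∧ 0 ≤ p₄ t
  hasDerivAt₁ : ∀ t, 0 ≤ t → HasDerivAt p₁ (k * (p₂ t * p₃ t - p₁ t * p₄ t)) t
  hasDerivAt₂ : ∀ t, 0 ≤ t → HasDerivAt p₂ (k * (p₁ t * p₄ t - p₂ t * p₃ t)) t
  hasDerivAt₃ : ∀ t, 0 ≤ t → HasDerivAt p₃ (k * (p₁ t * p₄ t - p₂ t * p₃ t)) t
  hasDerivAt₄ : ∀ t, 0 ≤ t → HasDerivAt p₄ (k * (p₂ t * p₃ t - p₁ t * p₄ t)) t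

namespace IsRecombinationSolution

variable {k : ℝ} {p₁ p₂ p₃ p₄ : ℝ → ℝ} {t : ℝ}

theorem add₁₂_eq (hp : IsRecombinationSolution k p₁ p₂ p₃ p₄) (ht : 0 ≤ t) :
    p₁ t + p₂ t = p₁ 0 + p₂ 0 :=
  add_eq_add_of_hasDerivAt hp.hasDerivAt₁ hp.hasDerivAt₂ (fun _ => by ring) ht

theorem add₁₃_eq (hp : IsRecombinationSolution k p₁ p₂ p₃ p₄) (ht : 0 ≤ t) :
    p₁ t + p₃ t = p₁ 0 + p₃ 0 :=
  add_eq_add_of_hasDerivAt hp.hasDerivAt₁ hp.hasDerivAt₃ (fun _ => by ring) ht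

theorem add₂₄_eq (hp : IsRecombinationSolution k p₁ p₂ p₃ p₄) (ht : 0 ≤ t) :
    p₂ t + p₄ t = p₂ 0 + p₄ 0 :=
  add_eq_add_of_hasDerivAt hp.hasDerivAt₂ hp.hasDerivAt₄ (fun _ => by ring) ht

theorem sum_eq (hp : IsRecombinationSolution k p₁ p₂ p₃ p₄) (ht : 0 ≤ t) :
    p₁ t + p₂ t + p₃ t + p₄ t = p₁ 0 + p₂ 0 + p₃ 0 + p₄ 0 := by
  linear_combination hp.add₁₃_eq ht + hp.add₂₄_eq ht

theorem hasDerivAt₁_eq_mul_sub (hp : IsRecombinationSolution k p₁ p₂ p₃ p₄) (ht : 0 ≤ t) :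
    HasDerivAt p₁ (k * ((p₁ 0 + p₂ 0) * (p₁ 0 + p₃ 0) -
      (p₁ 0 + p₂ 0 + p₃ 0 + p₄ 0) * p₁ t)) t := by
  refine (hp.hasDerivAt₁ t ht).congr_deriv ?_
  linear_combination (-k) * mul_sub_mul_eq_of_add_eq (hp.add₁₂_eq ht) (hp.add₁₃_eq ht)
    (hp.sum_eq ht)

theorem tendsto₁ (hp : IsRecombinationSolution k p₁ p₂ p₃ p₄) (hk : 0 < k) :
    Tendsto p₁ atTop (𝓝 ((p₁ 0 + p₂ 0) * (p₁ 0 + p₃ 0) / (p₁ 0 + p₂ 0 + p₃ 0 + p₄ 0))) := by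
  obtain ⟨n₁, n₂, n₃, n₄⟩ := hp.nonneg 0 le_rfl
  rcases (show 0 ≤ p₁ 0 + p₂ 0 + p₃ 0 + p₄ 0 by positivity).eq_or_lt with hs | hs
  · -- the whole trajectory vanishes, and so does the junk value `a * b / 0`
    rw [← hs, div_zero]
    refine tendsto_const_nhds.congr' ((eventually_ge_atTop 0).mono fun t ht => ?_)
    obtain ⟨m₁, m₂, m₃, m₄⟩ := hp.nonneg t ht
    linarith [hp.sum_eq ht]
  · refine tendsto_of_hasDerivAt_eq_mul_sub (mul_pos hk hs) fun t ht =>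
      (hp.hasDerivAt₁_eq_mul_sub ht).congr_deriv ?_
    field_simp

end IsRecombinationSolution

/-- **Two-locus, two-allele recombination: global convergence to a detailed-balancing
equilibrium.** Every differentiable nonnegative solution of
`ṗ₁ = ṗ₄ = k(p₂p₃ − p₁p₄)`, `ṗ₂ = ṗ₃ = k(p₁p₄ − p₂p₃)` with `k > 0` converges as `t → ∞`
to a point `q ∈ ℝ⁴₊` with `q₁q₄ = q₂q₃`; moreover, provided the (conserved) total sum is
positive, `q` is the unique nonnegative point with `q₁q₄ = q₂q₃` satisfying the conservation
relations `q₁+q₂ = p₁(0)+p₂(0)`, `q₁+q₃ = p₁(0)+p₃(0)`, and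
`q₁+q₂+q₃+q₄ = p₁(0)+p₂(0)+p₃(0)+p₄(0)`. -/
theorem convergence_two_locus
    (k : ℝ) (hk : 0 < k) (p₁ p₂ p₃ p₄ : ℝ → ℝ)
    (hnn : ∀ t, 0 ≤ t → 0 ≤ p₁ t ∧ 0 ≤ p₂ t ∧ 0 ≤ p₃ t ∧ 0 ≤ p₄ t)
    (h₁ : ∀ t, 0 ≤ t → HasDerivAt p₁ (k * (p₂ t * p₃ t - p₁ t * p₄ t)) t)
    (h₄ : ∀ t, 0 ≤ t → HasDerivAt p₄ (k * (p₂ t * p₃ t - p₁ t * p₄ t)) t)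
    (h₂ : ∀ t, 0 ≤ t → HasDerivAt p₂ (k * (p₁ t * p₄ t - p₂ t * p₃ t)) t)
    (h₃ : ∀ t, 0 ≤ t → HasDerivAt p₃ (k * (p₁ t * p₄ t - p₂ t * p₃ t)) t) :
    ∃ q₁ q₂ q₃ q₄ : ℝ,
      (0 ≤ q₁ ∧ 0 ≤ q₂ ∧ 0 ≤ q₃ ∧ 0 ≤ q₄) ∧
      q₁ * q₄ = q₂ * q₃ ∧
      Tendsto p₁ atTop (nhds q₁) ∧ Tendsto p₂ atTop (nhds q₂) ∧
      Tendsto p₃ atTop (nhds q₃) ∧ Tendsto p₄ atTop (nhds q₄) ∧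
      (0 < p₁ 0 + p₂ 0 + p₃ 0 + p₄ 0 →
        (q₁ + q₂ = p₁ 0 + p₂ 0 ∧ q₁ + q₃ = p₁ 0 + p₃ 0 ∧
          q₁ + q₂ + q₃ + q₄ = p₁ 0 + p₂ 0 + p₃ 0 + p₄ 0) ∧
        ∀ r₁ r₂ r₃ r₄ : ℝ, 0 ≤ r₁ → 0 ≤ r₂ → 0 ≤ r₃ → 0 ≤ r₄ →
          r₁ * r₄ = r₂ * r₃ →
          r₁ + r₂ = p₁ 0 + p₂ 0 → r₁ + r₃ = p₁ 0 + p₃ 0 →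
          r₁ + r₂ + r₃ + r₄ = p₁ 0 + p₂ 0 + p₃ 0 + p₄ 0 →
          r₁ = q₁ ∧ r₂ = q₂ ∧ r₃ = q₃ ∧ r₄ = q₄) := by
  have hp : IsRecombinationSolution k p₁ p₂ p₃ p₄ := ⟨hnn, h₁, h₂, h₃, h₄⟩
  set a := p₁ 0 + p₂ 0
  set b := p₁ 0 + p₃ 0
  set s := p₁ 0 + p₂ 0 + p₃ 0 + p₄ 0
  set L := a * b / s
  have hev : ∀ᶠ t in atTop, (0 : ℝ) ≤ t := eventually_ge_atTop 0
  have hL₁ : Tendsto p₁ atTop (𝓝 L) := hp.tendsto₁ hk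
  have hL₂ : Tendsto p₂ atTop (𝓝 (a - L)) := (tendsto_const_nhds.sub hL₁).congr'
    (hev.mono fun t ht => by linear_combination -hp.add₁₂_eq ht)
  have hL₃ : Tendsto p₃ atTop (𝓝 (b - L)) := (tendsto_const_nhds.sub hL₁).congr'
    (hev.mono fun t ht => by linear_combination -hp.add₁₃_eq ht)
  have hL₄ : Tendsto p₄ atTop (𝓝 (s - a - b + L)) := (tendsto_const_nhds.add hL₁).congr'
    (hev.mono fun t ht => by linear_combination hp.add₁₂_eq ht - hp.add₂₄_eq ht)
  have hLs : L * s = a * b := div_mul_cancel_of_imp fun hs => by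
    obtain ⟨n₁, n₂, n₃, n₄⟩ := hnn 0 le_rfl
    rw [show a = 0 by linarith, zero_mul]
  have hq₁₂ : L + (a - L) = a := by ring
  have hq₁₃ : L + (b - L) = b := by ring
  have hq : L + (a - L) + (b - L) + (s - a - b + L) = s := by ring
  refine ⟨L, a - L, b - L, s - a - b + L,
    ⟨ge_of_tendsto hL₁ (hev.mono fun t ht => (hnn t ht).1),
      ge_of_tendsto hL₂ (hev.mono fun t ht => (hnn t ht).2.1),
      ge_of_tendsto hL₃ (hev.mono fun t ht => (hnn t ht).2.2.1),
      ge_of_tendsto hL₄ (hev.mono fun t ht => (hnn t ht).2.2.2)⟩,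
    (mul_eq_mul_iff_of_add_eq hq₁₂ hq₁₃ hq).2 hLs, hL₁, hL₂, hL₃, hL₄,
    fun hs => ⟨⟨hq₁₂, hq₁₃, hq⟩, ?_⟩⟩
  intro r₁ r₂ r₃ r₄ _ _ _ _ hr h₁₂ h₁₃ hsum
  have hr₁ : r₁ = L := eq_div_of_mul_eq hs.ne' ((mul_eq_mul_iff_of_add_eq h₁₂ h₁₃ hsum).1 hr)
  refine ⟨hr₁, ?_, ?_, ?_⟩ <;> linarith
end

section
/- Under the standing assumption, a point p ∈ S_𝓖 is an equilibrium of the recombination dynamics (i.e., F(p) = 0) if and only if p is the product of its own marginals: p(g) = ∏_{i ∈ 𝓛} pᵢ(gᵢ) for all g ∈ 𝓖. -/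
set_option linter.unusedSectionVars false
set_option maxHeartbeats 1000000


open Finset

/-- Recombination of gametes `g` and `h` following pattern `{I, Iᶜ}`:
`(g_I h_J)ᵢ = gᵢ` for `i ∈ I` and `= hᵢ` for `i ∈ J = Iᶜ`. -/
def recomb {L : Type} [DecidableEq L] {A : L → Type} (I : Finset L)
    (g h : ∀ i, A i) : ∀ i, A i :=
  fun i => if i ∈ I then g i else h i

/-- The recombination vector field
`F(p) = (1/2) Σ_{g,h} Σ_{{I,J} ∈ 𝓟} c({I,J}) p(g) p(h) (g_I h_J + g_J h_I − g − h)`,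
where the sum over unordered patterns `{I,J}` is written as `(1/2) Σ_{I : Finset L}`
(every unordered pattern `{I, Iᶜ}` corresponds to exactly two subsets `I` and `Iᶜ`;
the rate constants satisfy `c I = c Iᶜ`). -/
noncomputable def recF {L : Type} [Fintype L] [DecidableEq L] {A : L → Type}
    [∀ i, Fintype (A i)] [∀ i, DecidableEq (A i)]
    (c : Finset L → ℝ) (p : (∀ i, A i) → ℝ) : (∀ i, A i) → ℝ :=
  fun x => (1 / 4) * ∑ g : ∀ i, A i, ∑ h : ∀ i, A i, ∑ I : Finset L,
    c I * p g * p h *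
      ((if x = recomb I g h then 1 else 0) + (if x = recomb Iᶜ g h then 1 else 0)
        - (if x = g then 1 else 0) - (if x = h then 1 else 0))

/-- The marginal frequency `pᵢ(a) = Σ_{g : gᵢ = a} p(g)`. -/
noncomputable def marg {L : Type} [Fintype L] [DecidableEq L] {A : L → Type}
    [∀ i, Fintype (A i)] [∀ i, DecidableEq (A i)]
    (p : (∀ i, A i) → ℝ) (i : L) (a : A i) : ℝ :=
  ∑ g : ∀ j, A j, if g i = a then p g else 0

section Aux
variable {L : Type} [Fintype L] [DecidableEq L] {A : L → Type}
  [∀ i, Fintype (A i)] [∀ i, DecidableEq (A i)]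

lemma recomb_recomb (I : Finset L) (g h : ∀ i, A i) :
    recomb I (recomb I g h) (recomb I h g) = g := by
  funext i; by_cases hi : i ∈ I <;> simp [recomb, hi]

lemma sum_recomb_pair (I : Finset L) (F : (∀ i, A i) → (∀ i, A i) → ℝ) :
    ∑ g : ∀ i, A i, ∑ h : ∀ i, A i, F (recomb I g h) (recomb I h g)
      = ∑ g : ∀ i, A i, ∑ h : ∀ i, A i, F g h := by
  rw [← Fintype.sum_prod_type', ← Fintype.sum_prod_type']
  have hT : Function.Involutive
      (fun gh : (∀ i, A i) × (∀ i, A i) => (recomb I gh.1 gh.2, recomb I gh.2 gh.1)) := by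
    rintro ⟨g, h⟩
    simp only [Prod.mk.injEq]
    exact ⟨recomb_recomb I g h, recomb_recomb I h g⟩
  exact Fintype.sum_bijective _ hT.bijective _ _ (fun gh => rfl)

/-- block marginal -/
noncomputable def mrg (p : (∀ i, A i) → ℝ) (K : Finset L) (x : ∀ i, A i) : ℝ :=
  ∑ g : ∀ i, A i, if ∀ i ∈ K, g i = x i then p g else 0

lemma mrg_nonneg {p : (∀ i, A i) → ℝ} (hp0 : ∀ g, 0 ≤ p g) (K : Finset L) (x : ∀ i, A i) :
    0 ≤ mrg p K x := by
  refine Finset.sum_nonneg fun g _ => ?_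
  split
  · exact hp0 g
  · exact le_rfl

lemma le_mrg {p : (∀ i, A i) → ℝ} (hp0 : ∀ g, 0 ≤ p g) (K : Finset L) (x : ∀ i, A i) :
    p x ≤ mrg p K x := by
  have : p x = if ∀ i ∈ K, x i = x i then p x else 0 := by simp
  rw [this]
  refine Finset.single_le_sum (f := fun g => if ∀ i ∈ K, g i = x i then p g else 0)
    (fun g _ => ?_) (mem_univ x)
  split
  · exact hp0 g
  · exact le_rfl

lemma mrg_univ (p : (∀ i, A i) → ℝ) (x : ∀ i, A i) : mrg p univ x = p x := by
  have : ∀ g : ∀ i, A i, (if ∀ i ∈ (univ : Finset L), g i = x i then p g else 0)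
      = if g = x then p g else 0 := by
    intro g
    congr 1
    simp [funext_iff]
  rw [mrg]
  simp only [this]
  simp

lemma mrg_empty {p : (∀ i, A i) → ℝ} (hp1 : ∑ g : ∀ i, A i, p g = 1) (x : ∀ i, A i) :
    mrg p ∅ x = 1 := by
  simp [mrg, hp1]

lemma mrg_singleton (p : (∀ i, A i) → ℝ) (i : L) (x : ∀ i, A i) :
    mrg p {i} x = marg p i (x i) := by
  unfold mrg marg
  congr 1; funext g
  simp

lemma mrg_congr (p : (∀ i, A i) → ℝ) (K : Finset L) {x y : ∀ i, A i}
    (hxy : ∀ i ∈ K, x i = y i) : mrg p K x = mrg p K y := by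
  unfold mrg
  congr 1; funext g
  refine if_congr ?_ rfl rfl
  constructor <;> intro h i hi
  · rw [h i hi]; exact hxy i hi
  · rw [h i hi, hxy i hi]

end Aux

section Aux2
variable {L : Type} [Fintype L] [DecidableEq L] {A : L → Type}
  [∀ i, Fintype (A i)] [∀ i, DecidableEq (A i)]

lemma recomb_agree (S K : Finset L) (g h x : ∀ i, A i) :
    (∀ i ∈ K, recomb S g h i = x i) ↔
      ((∀ i ∈ K ∩ S, g i = x i) ∧ (∀ i ∈ K \ S, h i = x i)) := by
  constructor
  · intro H
    constructor
    · intro i hi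
      rcases mem_inter.mp hi with ⟨hK, hS⟩
      have := H i hK
      simpa [recomb, hS] using this
    · intro i hi
      rcases mem_sdiff.mp hi with ⟨hK, hS⟩
      have := H i hK
      simpa [recomb, hS] using this
  · rintro ⟨h1, h2⟩ i hi
    by_cases hS : i ∈ S
    · have := h1 i (mem_inter.mpr ⟨hi, hS⟩)
      simpa [recomb, hS] using this
    · have := h2 i (mem_sdiff.mpr ⟨hi, hS⟩)
      simpa [recomb, hS] using this

lemma agree_compl_iff (I : Finset L) (g x : ∀ i, A i) :
    ((∀ i ∈ I, g i = x i) ∧ (∀ i ∈ Iᶜ, g i = x i)) ↔ g = x := by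
  constructor
  · rintro ⟨h1, h2⟩
    funext i
    by_cases hi : i ∈ I
    · exact h1 i hi
    · exact h2 i (mem_compl.mpr hi)
  · rintro rfl
    exact ⟨fun _ _ => rfl, fun _ _ => rfl⟩

lemma mrg_mul_compl (p : (∀ i, A i) → ℝ) (I : Finset L) (x : ∀ i, A i) :
    mrg p I x * mrg p Iᶜ x
      = ∑ h : ∀ i, A i, p (recomb I x h) * p (recomb I h x) := by
  unfold mrg
  rw [Finset.sum_mul_sum]
  have key := sum_recomb_pair I (fun a b =>
    (if ∀ i ∈ I, a i = x i then p a else 0) * (if ∀ i ∈ Iᶜ, b i = x i then p b else 0))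
  rw [← key]
  have hterm : ∀ g h : ∀ i, A i,
      (if ∀ i ∈ I, recomb I g h i = x i then p (recomb I g h) else 0) *
        (if ∀ i ∈ Iᶜ, recomb I h g i = x i then p (recomb I h g) else 0)
      = if g = x then p (recomb I g h) * p (recomb I h g) else 0 := by
    intro g h
    rw [ite_zero_mul_ite_zero]
    refine if_congr ?_ rfl rfl
    rw [recomb_agree, recomb_agree, ← agree_compl_iff I g x]
    have e1 : I ∩ I = I := inter_self I
    have e2 : I \ I = ∅ := by ext i; simp
    have e3 : Iᶜ ∩ I = ∅ := by ext i; simp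
    have e4 : Iᶜ \ I = Iᶜ := by ext i; simp
    rw [e1, e2, e3, e4]
    simp only [Finset.notMem_empty, false_implies, implies_true, and_true, true_and]
  simp only [hterm]
  rw [Finset.sum_comm]
  simp [Finset.sum_ite_eq']

lemma sum_mrg_mul_meas {p : (∀ i, A i) → ℝ} (hp1 : ∑ g : ∀ i, A i, p g = 1)
    (I : Finset L) (f : (∀ i, A i) → ℝ)
    (hf : ∀ a b : ∀ i, A i, (∀ i ∈ I, a i = b i) → f a = f b) :
    ∑ x : ∀ i, A i, mrg p I x * mrg p Iᶜ x * f x = ∑ a : ∀ i, A i, p a * f a := by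
  have e1 : ∀ x : ∀ i, A i, mrg p I x * mrg p Iᶜ x * f x
      = ∑ h : ∀ i, A i, p (recomb I x h) * p (recomb I h x) * f x := by
    intro x
    rw [mrg_mul_compl, Finset.sum_mul]
  simp only [e1]
  have key := sum_recomb_pair I (fun a b => p a * p b * f (recomb I a b))
  simp only [recomb_recomb] at key
  rw [key]
  have e2 : ∀ g h : ∀ i, A i, p g * p h * f (recomb I g h) = p g * f g * p h := by
    intro g h
    rw [hf (recomb I g h) g (fun i hi => by simp [recomb, hi])]
    ring
  simp only [e2, ← Finset.mul_sum, hp1, mul_one]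

lemma sum_mrg_mul_compl {p : (∀ i, A i) → ℝ} (hp1 : ∑ g : ∀ i, A i, p g = 1)
    (I : Finset L) :
    ∑ x : ∀ i, A i, mrg p I x * mrg p Iᶜ x = 1 := by
  have := sum_mrg_mul_meas hp1 I (fun _ => 1) (fun _ _ _ => rfl)
  simpa [hp1] using this

lemma mrg_split {p : (∀ i, A i) → ℝ} (S : Finset L)
    (hsplit : ∀ y, p y = mrg p S y * mrg p Sᶜ y) (K : Finset L) (x : ∀ i, A i) :
    mrg p K x = mrg p (K ∩ S) x * mrg p (K \ S) x := by
  have h1 : ∀ g : ∀ i, A i, (if ∀ i ∈ K, g i = x i then p g else 0)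
      = ∑ h : ∀ i, A i, (if ∀ i ∈ K, g i = x i then p (recomb S g h) * p (recomb S h g) else 0) := by
    intro g
    by_cases hg : ∀ i ∈ K, g i = x i
    · rw [if_pos hg, hsplit g, mrg_mul_compl]
      exact Finset.sum_congr rfl (fun h _ => (if_pos hg).symm)
    · rw [if_neg hg]
      symm
      simp [if_neg hg]
  rw [mrg]
  simp only [h1]
  have key := sum_recomb_pair S (fun a b =>
    if ∀ i ∈ K, recomb S a b i = x i then p a * p b else 0)
  simp only [recomb_recomb] at key
  rw [key]
  have h2 : ∀ g h : ∀ i, A i,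
      (if ∀ i ∈ K, recomb S g h i = x i then p g * p h else 0)
      = (if ∀ i ∈ K ∩ S, g i = x i then p g else 0) * (if ∀ i ∈ K \ S, h i = x i then p h else 0) := by
    intro g h
    rw [ite_zero_mul_ite_zero]
    exact if_congr (recomb_agree S K g h x) rfl rfl
  simp only [h2]
  rw [mrg, mrg, Finset.sum_mul_sum]

end Aux2

section Aux3
variable {L : Type} [Fintype L] [DecidableEq L] {A : L → Type}
  [∀ i, Fintype (A i)] [∀ i, DecidableEq (A i)]

lemma sum_pp_recomb (p : (∀ i, A i) → ℝ) (I : Finset L) (x : ∀ i, A i) :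
    ∑ g : ∀ i, A i, ∑ h : ∀ i, A i, p g * p h * (if x = recomb I g h then (1:ℝ) else 0)
      = mrg p I x * mrg p Iᶜ x := by
  have key := sum_recomb_pair I (fun a b => p a * p b * (if x = recomb I a b then (1:ℝ) else 0))
  simp only [recomb_recomb] at key
  rw [← key, mrg_mul_compl]
  have e : ∀ g h : ∀ i, A i,
      p (recomb I g h) * p (recomb I h g) * (if x = g then (1:ℝ) else 0)
      = if x = g then p (recomb I g h) * p (recomb I h g) else 0 := by
    intro g h
    split <;> ring
  simp only [e]
  rw [Finset.sum_comm]
  simp only [Finset.sum_ite_eq, mem_univ, if_true]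

lemma sum_pp_fst {p : (∀ i, A i) → ℝ} (hp1 : ∑ g : ∀ i, A i, p g = 1) (x : ∀ i, A i) :
    ∑ g : ∀ i, A i, ∑ h : ∀ i, A i, p g * p h * (if x = g then (1:ℝ) else 0) = p x := by
  have e : ∀ g h : ∀ i, A i, p g * p h * (if x = g then (1:ℝ) else 0)
      = p h * (if x = g then p g else 0) := by
    intro g h; split <;> ring
  simp only [e, ← Finset.sum_mul, hp1, ← Finset.mul_sum, one_mul]
  simp only [Finset.sum_ite_eq, mem_univ, if_true]

lemma sum_pp_snd {p : (∀ i, A i) → ℝ} (hp1 : ∑ g : ∀ i, A i, p g = 1) (x : ∀ i, A i) :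
    ∑ g : ∀ i, A i, ∑ h : ∀ i, A i, p g * p h * (if x = h then (1:ℝ) else 0) = p x := by
  have e : ∀ g : ∀ i, A i, ∑ h : ∀ i, A i, p g * p h * (if x = h then (1:ℝ) else 0)
      = p g * p x := by
    intro g
    have e2 : ∀ h : ∀ i, A i, p g * p h * (if x = h then (1:ℝ) else 0)
        = if x = h then p g * p h else 0 := by
      intro h; split <;> ring
    simp only [e2, Finset.sum_ite_eq, mem_univ, if_true]
  simp only [e, ← Finset.sum_mul, hp1, one_mul]

lemma recF_apply (c : Finset L → ℝ) {p : (∀ i, A i) → ℝ}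
    (hp1 : ∑ g : ∀ i, A i, p g = 1) (x : ∀ i, A i) :
    recF c p x = (1/2) * ∑ I : Finset L, c I * (mrg p I x * mrg p Iᶜ x - p x) := by
  unfold recF
  have s1 : ∀ g : ∀ i, A i, (∑ h : ∀ i, A i, ∑ I : Finset L,
      c I * p g * p h *
        ((if x = recomb I g h then (1:ℝ) else 0) + (if x = recomb Iᶜ g h then 1 else 0)
          - (if x = g then 1 else 0) - (if x = h then 1 else 0)))
      = ∑ I : Finset L, ∑ h : ∀ i, A i,
      c I * p g * p h *
        ((if x = recomb I g h then (1:ℝ) else 0) + (if x = recomb Iᶜ g h then 1 else 0)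
          - (if x = g then 1 else 0) - (if x = h then 1 else 0)) := fun g => Finset.sum_comm
  simp only [s1]
  rw [Finset.sum_comm]
  have term : ∀ I : Finset L, (∑ g : ∀ i, A i, ∑ h : ∀ i, A i,
      c I * p g * p h *
        ((if x = recomb I g h then (1:ℝ) else 0) + (if x = recomb Iᶜ g h then 1 else 0)
          - (if x = g then 1 else 0) - (if x = h then 1 else 0)))
      = 2 * (c I * (mrg p I x * mrg p Iᶜ x - p x)) := by
    intro I
    have expand : ∀ g h : ∀ i, A i,
        c I * p g * p h *
          ((if x = recomb I g h then (1:ℝ) else 0) + (if x = recomb Iᶜ g h then 1 else 0)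
            - (if x = g then 1 else 0) - (if x = h then 1 else 0))
        = c I * (p g * p h * (if x = recomb I g h then (1:ℝ) else 0))
          + c I * (p g * p h * (if x = recomb Iᶜ g h then (1:ℝ) else 0))
          - c I * (p g * p h * (if x = g then (1:ℝ) else 0))
          - c I * (p g * p h * (if x = h then (1:ℝ) else 0)) := by
      intro g h; ring
    simp only [expand, Finset.sum_add_distrib, Finset.sum_sub_distrib, ← Finset.mul_sum]
    rw [sum_pp_recomb, sum_pp_recomb, sum_pp_fst hp1, sum_pp_snd hp1, compl_compl]
    ring
  simp only [term, ← Finset.mul_sum]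
  ring
end Aux3

section Aux4
variable {L : Type} [Fintype L] [DecidableEq L] {A : L → Type}
  [∀ i, Fintype (A i)] [∀ i, DecidableEq (A i)]

lemma marg_sum {p : (∀ i, A i) → ℝ} (hp1 : ∑ g : ∀ i, A i, p g = 1) (i : L) :
    ∑ a : A i, marg p i a = 1 := by
  unfold marg
  rw [Finset.sum_comm]
  have e : ∀ g : ∀ j, A j, ∑ a : A i, (if g i = a then p g else 0) = p g := by
    intro g
    simp [Finset.sum_ite_eq']
  simp only [e, hp1]

lemma mrg_prod_of_indep {p : (∀ i, A i) → ℝ} (hp1 : ∑ g : ∀ i, A i, p g = 1)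
    (hpair : ∀ i j : L, i ≠ j → ∃ S : Finset L, i ∈ S ∧ j ∉ S ∧
      (∀ y, p y = mrg p S y * mrg p Sᶜ y)) :
    ∀ (K : Finset L) (x : ∀ i, A i), mrg p K x = ∏ i ∈ K, marg p i (x i) := by
  intro K
  induction K using Finset.strongInduction with
  | _ K ih =>
    intro x
    by_cases hK : 1 < K.card
    · obtain ⟨i, hi, j, hj, hij⟩ := Finset.one_lt_card.mp hK
      obtain ⟨S, hiS, hjS, hsplit⟩ := hpair i j hij
      have h1 : K ∩ S ⊂ K := by
        refine Finset.ssubset_iff_of_subset (Finset.inter_subset_left) |>.mpr ?_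
        exact ⟨j, hj, fun hmem => hjS (Finset.mem_inter.mp hmem).2⟩
      have h2 : K \ S ⊂ K := by
        refine Finset.ssubset_iff_of_subset (Finset.sdiff_subset) |>.mpr ?_
        exact ⟨i, hi, fun hmem => (Finset.mem_sdiff.mp hmem).2 hiS⟩
      rw [mrg_split S hsplit K x, ih _ h1 x, ih _ h2 x,
        Finset.prod_inter_mul_prod_diff]
    · push_neg at hK
      rcases Finset.eq_empty_or_nonempty K with rfl | ⟨i, hiK⟩
      · rw [mrg_empty hp1]
        simp
      · have : K = {i} := by
          apply Finset.eq_singleton_iff_unique_mem.mpr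
          exact ⟨hiK, fun b hb => Finset.card_le_one.mp hK b hb i hiK⟩
        subst this
        rw [mrg_singleton]
        simp

lemma prod_marg_of_indep {p : (∀ i, A i) → ℝ} (hp1 : ∑ g : ∀ i, A i, p g = 1)
    (hpair : ∀ i j : L, i ≠ j → ∃ S : Finset L, i ∈ S ∧ j ∉ S ∧
      (∀ y, p y = mrg p S y * mrg p Sᶜ y)) (g : ∀ i, A i) :
    p g = ∏ i : L, marg p i (g i) := by
  rw [← mrg_univ p g, mrg_prod_of_indep hp1 hpair univ g]

/-- block marginals of a product measure -/
lemma mrg_of_prod {p : (∀ i, A i) → ℝ} (hp1 : ∑ g : ∀ i, A i, p g = 1)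
    (hprod : ∀ g : ∀ i, A i, p g = ∏ i : L, marg p i (g i)) (K : Finset L) (x : ∀ i, A i) :
    mrg p K x = ∏ i ∈ K, marg p i (x i) := by
  unfold mrg
  have e : ∀ g : ∀ i, A i, (if ∀ i ∈ K, g i = x i then p g else 0)
      = ∏ i : L, (if i ∈ K then (if g i = x i then marg p i (g i) else 0)
          else marg p i (g i)) := by
    intro g
    by_cases hg : ∀ i ∈ K, g i = x i
    · rw [if_pos hg, hprod g]
      refine Finset.prod_congr rfl fun i _ => ?_
      by_cases hiK : i ∈ K
      · rw [if_pos hiK, if_pos (hg i hiK)]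
      · rw [if_neg hiK]
    · rw [if_neg hg]
      push_neg at hg
      obtain ⟨i, hiK, hgx⟩ := hg
      symm
      apply Finset.prod_eq_zero (Finset.mem_univ i)
      rw [if_pos hiK, if_neg hgx]
  simp only [e]
  rw [← Fintype.piFinset_univ, ← Finset.prod_univ_sum (t := fun _ => univ)
    (f := fun i a => if i ∈ K then (if a = x i then marg p i a else 0) else marg p i a)]
  have e2 : ∀ i : L, (∑ a : A i, (if i ∈ K then (if a = x i then marg p i a else 0)
      else marg p i a)) = if i ∈ K then marg p i (x i) else 1 := by
    intro i
    by_cases hiK : i ∈ K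
    · simp only [if_pos hiK]
      simp [Finset.sum_ite_eq', Finset.mem_univ]
    · simp only [if_neg hiK]
      exact marg_sum hp1 i
  simp only [e2]
  rw [Finset.prod_ite_mem, Finset.univ_inter]

end Aux4

section Aux5
open Real
variable {L : Type} [Fintype L] [DecidableEq L] {A : L → Type}
  [∀ i, Fintype (A i)] [∀ i, DecidableEq (A i)]

lemma gibbs_point {a b : ℝ} (ha : 0 ≤ a) (hb : 0 ≤ b) (hab : a ≠ 0 → b ≠ 0) :
    a - b ≤ a * Real.log a - a * Real.log b := by
  rcases eq_or_lt_of_le ha with h | h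
  · simp [← h]
    exact hb
  · have hbne : b ≠ 0 := hab (ne_of_gt h)
    have hbpos : 0 < b := lt_of_le_of_ne hb (Ne.symm hbne)
    have hlog := Real.log_le_sub_one_of_pos (div_pos hbpos h)
    rw [Real.log_div hbne (ne_of_gt h)] at hlog
    have := mul_le_mul_of_nonneg_left hlog (le_of_lt h)
    have hda : a * (b / a - 1) = b - a := by field_simp
    nlinarith

lemma gibbs_point_lt {a b : ℝ} (ha : 0 ≤ a) (hb : 0 ≤ b) (hab : a ≠ 0 → b ≠ 0)
    (hne : a ≠ b) : a - b < a * Real.log a - a * Real.log b := by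
  rcases eq_or_lt_of_le ha with h | h
  · have hbne : 0 < b := lt_of_le_of_ne hb (fun hb0 => hne (hb0 ▸ h.symm ▸ rfl))
    simp [← h]
    linarith
  · have hbne : b ≠ 0 := hab (ne_of_gt h)
    have hbpos : 0 < b := lt_of_le_of_ne hb (Ne.symm hbne)
    have hba : b / a ≠ 1 := by
      intro hcon
      exact hne ((div_eq_one_iff_eq (ne_of_gt h)).mp hcon).symm
    have hlog := Real.log_lt_sub_one_of_pos (div_pos hbpos h) hba
    rw [Real.log_div hbne (ne_of_gt h)] at hlog
    have := mul_lt_mul_of_pos_left hlog h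
    have hda : a * (b / a - 1) = b - a := by field_simp
    nlinarith

variable {p : (∀ i, A i) → ℝ}

lemma q_nonneg (hp0 : ∀ g, 0 ≤ p g) (I : Finset L) (x : ∀ i, A i) :
    0 ≤ mrg p I x * mrg p Iᶜ x :=
  mul_nonneg (mrg_nonneg hp0 I x) (mrg_nonneg hp0 Iᶜ x)

lemma q_ne_zero (hp0 : ∀ g, 0 ≤ p g) (I : Finset L) (x : ∀ i, A i) (hx : p x ≠ 0) :
    mrg p I x * mrg p Iᶜ x ≠ 0 := by
  have hpx : 0 < p x := lt_of_le_of_ne (hp0 x) (Ne.symm hx)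
  have h1 : 0 < mrg p I x := lt_of_lt_of_le hpx (le_mrg hp0 I x)
  have h2 : 0 < mrg p Iᶜ x := lt_of_lt_of_le hpx (le_mrg hp0 Iᶜ x)
  positivity

/-- relative entropy of `p` w.r.t. the `I`-recombined measure -/
noncomputable def Drel (p : (∀ i, A i) → ℝ) (I : Finset L) : ℝ :=
  ∑ x : ∀ i, A i, (p x * Real.log (p x) - p x * Real.log (mrg p I x * mrg p Iᶜ x))

lemma Drel_nonneg (hp0 : ∀ g, 0 ≤ p g) (hp1 : ∑ g : ∀ i, A i, p g = 1) (I : Finset L) :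
    0 ≤ Drel p I := by
  have key : ∑ x : ∀ i, A i, (p x - mrg p I x * mrg p Iᶜ x) ≤ Drel p I := by
    refine Finset.sum_le_sum fun x _ => gibbs_point (hp0 x) (q_nonneg hp0 I x) (q_ne_zero hp0 I x)
  rwa [Finset.sum_sub_distrib, hp1, sum_mrg_mul_compl hp1, sub_self] at key

lemma eq_q_of_Drel_eq_zero (hp0 : ∀ g, 0 ≤ p g) (hp1 : ∑ g : ∀ i, A i, p g = 1)
    (I : Finset L) (hD : Drel p I = 0) (x : ∀ i, A i) :
    p x = mrg p I x * mrg p Iᶜ x := by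
  by_contra hne
  have key : ∑ y : ∀ i, A i, (p y - mrg p I y * mrg p Iᶜ y) < Drel p I := by
    refine Finset.sum_lt_sum (fun y _ => gibbs_point (hp0 y) (q_nonneg hp0 I y) (q_ne_zero hp0 I y)) ?_
    exact ⟨x, Finset.mem_univ x, gibbs_point_lt (hp0 x) (q_nonneg hp0 I x)
      (q_ne_zero hp0 I x) hne⟩
  rw [Finset.sum_sub_distrib, hp1, sum_mrg_mul_compl hp1, sub_self, hD] at key
  exact lt_irrefl 0 key

lemma entropy_identity (hp0 : ∀ g, 0 ≤ p g) (hp1 : ∑ g : ∀ i, A i, p g = 1) (I : Finset L) :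
    ∑ x : ∀ i, A i, (mrg p I x * mrg p Iᶜ x) * Real.log (mrg p I x * mrg p Iᶜ x)
      = ∑ x : ∀ i, A i, p x * Real.log (mrg p I x * mrg p Iᶜ x) := by
  have step : ∀ (r : (∀ i, A i) → ℝ), (∀ x, r x ≠ 0 → mrg p I x * mrg p Iᶜ x ≠ 0) →
      ∑ x : ∀ i, A i, r x * Real.log (mrg p I x * mrg p Iᶜ x)
        = ∑ x : ∀ i, A i, r x * Real.log (mrg p I x)
          + ∑ x : ∀ i, A i, r x * Real.log (mrg p Iᶜ x) := by
    intro r hr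
    rw [← Finset.sum_add_distrib]
    refine Finset.sum_congr rfl fun x _ => ?_
    by_cases hx : r x = 0
    · simp [hx]
    · have hq := hr x hx
      have h1 : mrg p I x ≠ 0 := fun h => hq (by rw [h, zero_mul])
      have h2 : mrg p Iᶜ x ≠ 0 := fun h => hq (by rw [h, mul_zero])
      rw [Real.log_mul h1 h2, mul_add]
  rw [step (fun x => mrg p I x * mrg p Iᶜ x) (fun x hx => hx),
    step p (fun x hx => q_ne_zero hp0 I x hx)]
  have e1 : ∑ x : ∀ i, A i, (mrg p I x * mrg p Iᶜ x) * Real.log (mrg p I x)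
      = ∑ x : ∀ i, A i, p x * Real.log (mrg p I x) := by
    have := sum_mrg_mul_meas hp1 I (fun y => Real.log (mrg p I y))
      (fun a b hab => congrArg Real.log (mrg_congr p I hab))
    simpa using this
  have e2 : ∑ x : ∀ i, A i, (mrg p I x * mrg p Iᶜ x) * Real.log (mrg p Iᶜ x)
      = ∑ x : ∀ i, A i, p x * Real.log (mrg p Iᶜ x) := by
    have := sum_mrg_mul_meas hp1 Iᶜ (fun y => Real.log (mrg p Iᶜ y))
      (fun a b hab => congrArg Real.log (mrg_congr p Iᶜ hab))
    rw [compl_compl] at this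
    rw [← this]
    refine Finset.sum_congr rfl fun x _ => by ring
  rw [e1, e2]

end Aux5

section Aux6
open Real
variable {L : Type} [Fintype L] [DecidableEq L] {A : L → Type}
  [∀ i, Fintype (A i)] [∀ i, DecidableEq (A i)]
variable {p : (∀ i, A i) → ℝ}

lemma split_of_equilibrium (hp0 : ∀ g, 0 ≤ p g) (hp1 : ∑ g : ∀ i, A i, p g = 1)
    {c : Finset L → ℝ} (hc : ∀ I, 0 ≤ c I)
    (heq : ∀ x : ∀ i, A i, ∑ I : Finset L, c I * (mrg p I x * mrg p Iᶜ x - p x) = 0)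
    {I0 : Finset L} (hI0 : 0 < c I0) :
    ∀ x : ∀ i, A i, p x = mrg p I0 x * mrg p I0ᶜ x := by
  set C : ℝ := ∑ I : Finset L, c I with hCdef
  have hC : 0 < C := lt_of_lt_of_le hI0 (Finset.single_le_sum (fun I _ => hc I) (mem_univ I0))
  have hw1 : ∑ I : Finset L, c I / C = 1 := by
    rw [← Finset.sum_div]
    exact div_self (ne_of_gt hC)
  have hrep : ∀ x : ∀ i, A i, ∑ I : Finset L, (c I / C) * (mrg p I x * mrg p Iᶜ x) = p x := by
    intro x
    have h1 : ∑ I : Finset L, c I * (mrg p I x * mrg p Iᶜ x) = C * p x := by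
      have h := heq x
      simp only [mul_sub] at h
      rw [Finset.sum_sub_distrib, sub_eq_zero] at h
      rw [h, ← Finset.sum_mul]
    simp only [div_mul_eq_mul_div, ← Finset.sum_div, h1]
    rw [mul_comm, mul_div_assoc, div_self (ne_of_gt hC), mul_one]
  have hjen : ∀ x : ∀ i, A i,
      ∑ I : Finset L, (c I / C) * Real.negMulLog (mrg p I x * mrg p Iᶜ x)
        ≤ Real.negMulLog (p x) := by
    intro x
    have h := Real.concaveOn_negMulLog.le_map_sum (t := (univ : Finset (Finset L)))
      (w := fun I => c I / C) (p := fun I => mrg p I x * mrg p Iᶜ x)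
      (fun I _ => div_nonneg (hc I) hC.le) hw1 (fun I _ => q_nonneg hp0 I x)
    simp only [smul_eq_mul] at h
    rwa [hrep x] at h
  have hHq : ∀ I : Finset L,
      ∑ x : ∀ i, A i, Real.negMulLog (mrg p I x * mrg p Iᶜ x)
        = (∑ x : ∀ i, A i, Real.negMulLog (p x)) + Drel p I := by
    intro I
    unfold Drel
    simp only [Real.negMulLog, neg_mul]
    rw [Finset.sum_neg_distrib, Finset.sum_neg_distrib, entropy_identity hp0 hp1 I,
      Finset.sum_sub_distrib]
    ring
  have hsum : ∑ I : Finset L, (c I / C) * ∑ x : ∀ i, A i,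
      Real.negMulLog (mrg p I x * mrg p Iᶜ x) ≤ ∑ x : ∀ i, A i, Real.negMulLog (p x) := by
    calc ∑ I : Finset L, (c I / C) * ∑ x : ∀ i, A i, Real.negMulLog (mrg p I x * mrg p Iᶜ x)
        = ∑ x : ∀ i, A i, ∑ I : Finset L, (c I / C) * Real.negMulLog (mrg p I x * mrg p Iᶜ x) := by
          simp only [Finset.mul_sum]
          exact Finset.sum_comm
      _ ≤ ∑ x : ∀ i, A i, Real.negMulLog (p x) := Finset.sum_le_sum fun x _ => hjen x
  have hfin : ∑ I : Finset L, (c I / C) * Drel p I ≤ 0 := by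
    simp only [hHq, mul_add] at hsum
    rw [Finset.sum_add_distrib, ← Finset.sum_mul, hw1, one_mul] at hsum
    linarith
  have hnn : ∀ I ∈ (univ : Finset (Finset L)), 0 ≤ (c I / C) * Drel p I :=
    fun I _ => mul_nonneg (div_nonneg (hc I) hC.le) (Drel_nonneg hp0 hp1 I)
  have hzero := (Finset.sum_eq_zero_iff_of_nonneg hnn).mp
    (le_antisymm hfin (Finset.sum_nonneg hnn)) I0 (mem_univ I0)
  have hD : Drel p I0 = 0 :=
    (mul_eq_zero.mp hzero).resolve_left (ne_of_gt (div_pos hI0 hC))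
  exact fun x => eq_q_of_Drel_eq_zero hp0 hp1 I0 hD x

end Aux6

/-- **Equilibria of the recombination dynamics (Lemma 1).**
Under the standing assumption (every pair of distinct loci gets separated by patterns of
positive total rate), a point `p` of the simplex `S_𝓖` is an equilibrium of the
recombination dynamics, `F(p) = 0`, if and only if `p` is the product of its own
marginals: `p(g) = ∏ᵢ pᵢ(gᵢ)` for all gametes `g`. -/
theorem equilibrium_iff_product_of_marginals
    {L : Type} [Fintype L] [DecidableEq L] [Nonempty L]
    (A : L → Type) [∀ i, Fintype (A i)] [∀ i, DecidableEq (A i)]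
    (hA : ∀ i, 2 ≤ Fintype.card (A i))
    (c : Finset L → ℝ) (hc : ∀ I, 0 ≤ c I) (hcsym : ∀ I, c I = c Iᶜ)
    (hsep : ∀ i j : L, i ≠ j →
      0 < ∑ I ∈ univ.filter (fun I : Finset L => i ∈ I ∧ j ∉ I), c I)
    (p : (∀ i, A i) → ℝ) (hp0 : ∀ g, 0 ≤ p g) (hp1 : ∑ g : ∀ i, A i, p g = 1) :
    recF c p = 0 ↔ ∀ g : ∀ i, A i, p g = ∏ i : L, marg p i (g i) := by
  constructor
  · intro heqF
    have heq : ∀ x : ∀ i, A i, ∑ I : Finset L, c I * (mrg p I x * mrg p Iᶜ x - p x) = 0 := by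
      intro x
      have h := congrFun heqF x
      rw [recF_apply c hp1 x, Pi.zero_apply] at h
      linarith
    refine prod_marg_of_indep hp1 ?_
    intro i j hij
    have hex : ∃ I ∈ univ.filter (fun I : Finset L => i ∈ I ∧ j ∉ I), 0 < c I := by
      by_contra hcon
      push_neg at hcon
      have := Finset.sum_nonpos hcon
      have hpos := hsep i j hij
      linarith
    obtain ⟨I0, hI0mem, hI0⟩ := hex
    simp only [Finset.mem_filter] at hI0mem
    exact ⟨I0, hI0mem.2.1, hI0mem.2.2, split_of_equilibrium hp0 hp1 hc heq hI0⟩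
  · intro hprod
    funext x
    rw [Pi.zero_apply, recF_apply c hp1 x]
    have hz : ∀ I : Finset L, c I * (mrg p I x * mrg p Iᶜ x - p x) = 0 := by
      intro I
      rw [mrg_of_prod hp1 hprod I x, mrg_of_prod hp1 hprod Iᶜ x,
        Finset.prod_mul_prod_compl, ← hprod x, sub_self, mul_zero]
    rw [Finset.sum_eq_zero (fun I _ => hz I), mul_zero]
end

section
/- Under the standing assumption, every equilibrium p ∈ S_𝓖 of the recombination dynamics is detailed-balancing: p(g)·p(h) = p(g_I h_J)·p(g_J h_I) for all gametes g,h ∈ 𝓖 and all recombination patterns {I,J} ∈ 𝓟. -/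
/-!
At an equilibrium, `p` is a convex combination of its recombinators `R_I p = π_I p ⊗ π_{Iᶜ} p`
(weights proportional to `c I`). Recombination never lowers the entropy, and leaves it unchanged
only when `R_I p = p`, whereas concavity bounds the mixed entropies of the `R_I p` by the entropy
of `p`; hence `R_I p = p` whenever `c I > 0`. The patterns along which `p` splits form a Boolean
algebra (product structure passes to marginals), which by the separation assumption contains all
of them. Splitting along `I` is exactly detailed balance for `I`.
-/

open Finset

open Real

lemma mul_log_le_mul_log_sub_add {a b : ℝ} (ha : 0 ≤ a) (hb : 0 ≤ b) (hab : b = 0 → a = 0) :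
    a * log b ≤ a * log a - a + b ∧ (a * log b = a * log a - a + b → a = b) := by
  rcases ha.eq_or_lt with rfl | ha
  · simp only [zero_mul, sub_zero, zero_add]
    exact ⟨hb, id⟩
  have hb : 0 < b := hb.lt_of_ne' fun h => ha.ne' (hab h)
  have hdiv : log (b / a) = log b - log a := log_div hb.ne' ha.ne'
  refine ⟨?_, fun h => ?_⟩
  · have := mul_le_mul_of_nonneg_left (log_le_sub_one_of_pos (div_pos hb ha)) ha.le
    rw [hdiv, mul_sub_one, mul_div_cancel₀ _ ha.ne'] at this
    linarith
  · by_contra hne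
    have := mul_lt_mul_of_pos_left
      (log_lt_sub_one_of_pos (div_pos hb ha) (div_ne_one_of_ne (Ne.symm hne))) ha
    rw [hdiv, mul_sub_one, mul_div_cancel₀ _ ha.ne'] at this
    linarith

/-- Gibbs' inequality. -/
lemma sum_mul_log_le_sum_mul_log {α : Type*} [Fintype α] {p q : α → ℝ} (hp : ∀ x, 0 ≤ p x) (hq : ∀ x, 0 ≤ q x)
    (hpq : ∀ x, q x = 0 → p x = 0) (hsum : ∑ x, q x ≤ ∑ x, p x) :
    ∑ x, p x * log (q x) ≤ ∑ x, p x * log (p x) ∧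
      (∑ x, p x * log (q x) = ∑ x, p x * log (p x) → p = q) := by
  have hgap (x : α) : 0 ≤ p x * log (p x) - p x + q x - p x * log (q x) := by
    linarith [(mul_log_le_mul_log_sub_add (hp x) (hq x) (hpq x)).1]
  have hsum_gap : ∑ x, (p x * log (p x) - p x + q x - p x * log (q x)) =
      ∑ x, p x * log (p x) - ∑ x, p x * log (q x) + (∑ x, q x - ∑ x, p x) := by
    simp only [Finset.sum_sub_distrib, Finset.sum_add_distrib]
    ring
  have hgap_sum := Finset.sum_nonneg fun x (_ : x ∈ univ) => hgap x
  refine ⟨by linarith, fun h => funext fun x => ?_⟩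
  have hzero := (Finset.sum_eq_zero_iff_of_nonneg fun x _ => hgap x).1
    (le_antisymm (by linarith) hgap_sum) x (mem_univ x)
  exact (mul_log_le_mul_log_sub_add (hp x) (hq x) (hpq x)).2 (by linarith)

noncomputable def entropy {α : Type*} [Fintype α] (f : α → ℝ) : ℝ :=
  ∑ x, negMulLog (f x)

lemma sum_mul_entropy_le_mul_entropy {ι α : Type*} [Fintype α] {s : Finset ι} {w : ι → ℝ}
    {q : ι → α → ℝ} {p : α → ℝ} (hw : ∀ i ∈ s, 0 ≤ w i) (hw_pos : 0 < ∑ i ∈ s, w i)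
    (hq : ∀ i ∈ s, ∀ x, 0 ≤ q i x) (hp : ∀ x, (∑ i ∈ s, w i) * p x = ∑ i ∈ s, w i * q i x) :
    ∑ i ∈ s, w i * entropy (q i) ≤ (∑ i ∈ s, w i) * entropy p := by
  have hjensen (x : α) : ∑ i ∈ s, w i * negMulLog (q i x) ≤ (∑ i ∈ s, w i) * negMulLog (p x) := by
    have h := concaveOn_negMulLog.le_map_centerMass hw hw_pos fun i hi => Set.mem_Ici.2 (hq i hi x)
    have hcenter : s.centerMass w (fun i => q i x) = p x := by
      rw [Finset.centerMass, smul_eq_mul, inv_mul_eq_div, div_eq_iff hw_pos.ne']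
      simp only [smul_eq_mul, ← hp, mul_comm]
    rw [hcenter, Finset.centerMass, smul_eq_mul, inv_mul_le_iff₀ hw_pos] at h
    simpa only [smul_eq_mul, Function.comp_apply] using h
  calc ∑ i ∈ s, w i * entropy (q i)
      = ∑ x, ∑ i ∈ s, w i * negMulLog (q i x) := by
        simp only [entropy, Finset.mul_sum]
        exact Finset.sum_comm
    _ ≤ ∑ x, (∑ i ∈ s, w i) * negMulLog (p x) := Finset.sum_le_sum fun x _ => hjensen x
    _ = (∑ i ∈ s, w i) * entropy p := by rw [entropy, Finset.mul_sum]

/-- Each singleton is an intersection of separating sets, and every set a union of singletons. -/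
lemma BooleanSubalgebra.eq_top_of_separates {α : Type*} [Fintype α] [DecidableEq α]
    {B : BooleanSubalgebra (Finset α)} (hB : ∀ i j, i ≠ j → ∃ S ∈ B, i ∈ S ∧ j ∉ S) : B = ⊤ := by
  choose! S hSB hiS hjS using hB
  have hsingleton (i : α) : ({i} : Finset α) ∈ B := by
    have hinf : (univ.erase i).inf (S i) = {i} := by
      ext j
      simp only [Finset.mem_inf, Finset.mem_erase, Finset.mem_univ, and_true,
        Finset.mem_singleton]
      refine ⟨fun h => by_contra fun hji => hjS i j (Ne.symm hji) (h j hji), ?_⟩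
      rintro rfl k hk
      exact hiS j k (Ne.symm hk)
    rw [← hinf]
    exact Finset.inf_induction B.top_mem (fun _ h₁ _ h₂ => B.inf_mem h₁ h₂)
      fun j hj => hSB i j (Ne.symm (Finset.ne_of_mem_erase hj))
  refine eq_top_iff.2 fun K _ => ?_
  rw [← Finset.sup_singleton_eq_self K]
  exact Finset.sup_induction B.bot_mem (fun _ h₁ _ h₂ => B.sup_mem h₁ h₂) fun i _ => hsingleton i

section Recombination

variable {L : Type} [DecidableEq L] {A : L → Type}

section Recomb

variable {I : Finset L} {g h x : ∀ i, A i}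

lemma recomb_agree_iff {W : Finset L} :
    (∀ i ∈ W, recomb I g h i = x i) ↔ (∀ i ∈ W ∩ I, g i = x i) ∧ ∀ i ∈ W \ I, h i = x i := by
  simp only [recomb, Finset.mem_inter, Finset.mem_sdiff]
  constructor
  · intro hx
    exact ⟨fun i hi => by simpa [hi.2] using hx i hi.1,
      fun i hi => by simpa [hi.2] using hx i hi.1⟩
  · rintro ⟨hg, hh⟩ i hi
    split_ifs with hiI
    exacts [hg i ⟨hi, hiI⟩, hh i ⟨hi, hiI⟩]

variable [Fintype L]

lemma recomb_eq_iff : recomb I g h = x ↔ (∀ i ∈ I, g i = x i) ∧ ∀ i ∈ Iᶜ, h i = x i := by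
  simp only [funext_iff, recomb, Finset.mem_compl]
  constructor
  · rintro hx
    exact ⟨fun i hi => by simpa [hi] using hx i, fun i hi => by simpa [hi] using hx i⟩
  · rintro ⟨hg, hh⟩ i
    split_ifs with hi
    exacts [hg i hi, hh i hi]

end Recomb

variable [Fintype L] [∀ i, Fintype (A i)] [∀ i, DecidableEq (A i)]

/-- The marginal `π_I p`, evaluated at the `I`-part of `x`. -/
noncomputable def marginalOn (p : (∀ i, A i) → ℝ) (I : Finset L) (x : ∀ i, A i) : ℝ :=
  ∑ g, if ∀ i ∈ I, g i = x i then p g else 0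

/-- The recombinator `R_I p = π_I p ⊗ π_{Iᶜ} p`. -/
noncomputable def recombinator (p : (∀ i, A i) → ℝ) (I : Finset L) (x : ∀ i, A i) : ℝ :=
  marginalOn p I x * marginalOn p Iᶜ x

section Marginal

variable {p : (∀ i, A i) → ℝ} {I : Finset L} {x : ∀ i, A i}

lemma marginalOn_congr {y : ∀ i, A i} (hxy : ∀ i ∈ I, x i = y i) :
    marginalOn p I x = marginalOn p I y := by
  unfold marginalOn
  refine Finset.sum_congr rfl fun g _ => if_congr ?_ rfl rfl
  exact forall₂_congr fun i hi => by rw [hxy i hi]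

lemma le_marginalOn (hp : ∀ g, 0 ≤ p g) : p x ≤ marginalOn p I x := by
  calc p x = if ∀ i ∈ I, x i = x i then p x else 0 := by simp
    _ ≤ marginalOn p I x :=
      Finset.single_le_sum (f := fun g => if ∀ i ∈ I, g i = x i then p g else 0)
        (fun g _ => by split_ifs <;> simp [hp]) (mem_univ x)

lemma marginalOn_recomb {g h : ∀ i, A i} : marginalOn p I (recomb I g h) = marginalOn p I g :=
  marginalOn_congr fun i hi => by simp [recomb, hi]

lemma marginalOn_compl_recomb {g h : ∀ i, A i} :
    marginalOn p Iᶜ (recomb I g h) = marginalOn p Iᶜ h :=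
  marginalOn_congr fun i hi => by simp [recomb, Finset.mem_compl.1 hi]

lemma marginalOn_empty : marginalOn p ∅ x = ∑ g, p g := by
  simp [marginalOn]

lemma marginalOn_univ : marginalOn p univ x = p x := by
  simp [marginalOn, ← funext_iff]

end Marginal

section Recombinator

variable {p : (∀ i, A i) → ℝ} {I : Finset L}

lemma recombinator_compl : recombinator p Iᶜ = recombinator p I := by
  funext x
  rw [recombinator, recombinator, compl_compl, mul_comm]

lemma recombinator_empty (hp1 : ∑ g, p g = 1) : recombinator p ∅ = p := by
  funext x
  rw [recombinator, marginalOn_empty, hp1, one_mul, Finset.compl_empty, marginalOn_univ]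

lemma recombinator_recomb {g h : ∀ i, A i} :
    recombinator p I (recomb I g h) = marginalOn p I g * marginalOn p Iᶜ h := by
  rw [recombinator, marginalOn_recomb, marginalOn_compl_recomb]

lemma sum_mul_recombinator (F : (∀ i, A i) → ℝ) :
    ∑ x, F x * recombinator p I x = ∑ g, ∑ h, p g * p h * F (recomb I g h) := by
  have hR (x : ∀ i, A i) :
      recombinator p I x = ∑ g, ∑ h, if recomb I g h = x then p g * p h else 0 := by
    simp only [recombinator, marginalOn, Finset.sum_mul_sum, ite_zero_mul_ite_zero,
      recomb_eq_iff]
  simp only [hR, Finset.mul_sum, mul_ite, mul_zero]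
  rw [Finset.sum_comm]
  refine Finset.sum_congr rfl fun g _ => ?_
  rw [Finset.sum_comm]
  refine Finset.sum_congr rfl fun h _ => ?_
  rw [Finset.sum_ite_eq, if_pos (mem_univ _), mul_comm]

lemma sum_recombinator : ∑ x, recombinator p I x = (∑ g, p g) ^ 2 := by
  simpa [sq, Finset.sum_mul_sum] using sum_mul_recombinator (p := p) (I := I) fun _ => 1

end Recombinator

section Splitting

variable {p : (∀ i, A i) → ℝ} {I J K : Finset L}

lemma marginalOn_eq_mul_of_recombinator_eq (hK : recombinator p K = p) (W : Finset L)
    (x : ∀ i, A i) :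
    marginalOn p W x = marginalOn p (W ∩ K) x * marginalOn p (W \ K) x := by
  calc marginalOn p W x
      = ∑ y, (if ∀ i ∈ W, y i = x i then 1 else 0) * recombinator p K y := by
        simp only [hK, boole_mul, marginalOn]
    _ = ∑ g, ∑ h, (if ∀ i ∈ W ∩ K, g i = x i then p g else 0) *
          (if ∀ i ∈ W \ K, h i = x i then p h else 0) := by
        simp only [ite_zero_mul_ite_zero]
        simp only [sum_mul_recombinator, recomb_agree_iff, mul_ite, mul_one, mul_zero]
    _ = marginalOn p (W ∩ K) x * marginalOn p (W \ K) x := by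
        rw [marginalOn, marginalOn, Finset.sum_mul_sum]

lemma recombinator_inter (hI : recombinator p I = p) (hJ : recombinator p J = p) :
    recombinator p (I ∩ J) = p := by
  funext x
  have hJI := marginalOn_eq_mul_of_recombinator_eq hI J x
  have hcompl := marginalOn_eq_mul_of_recombinator_eq hJ (I ∩ J)ᶜ x
  rw [Finset.inter_comm J I] at hJI
  rw [show (I ∩ J)ᶜ ∩ J = J \ I by ext; simp; tauto,
    show (I ∩ J)ᶜ \ J = Jᶜ by ext; simp; tauto] at hcompl
  rw [recombinator, hcompl, ← mul_assoc, ← hJI, ← recombinator, hJ]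

variable (p) in
noncomputable def splittingAlgebra (hp1 : ∑ g, p g = 1) : BooleanSubalgebra (Finset L) where
  carrier := {I | recombinator p I = p}
  infClosed' _ hI _ hJ := recombinator_inter hI hJ
  supClosed' I hI J hJ := by
    have h := recombinator_inter (I := Iᶜ) (J := Jᶜ)
      (recombinator_compl.trans hI) (recombinator_compl.trans hJ)
    rwa [← Finset.compl_union, recombinator_compl] at h
  compl_mem' hI := recombinator_compl.trans hI
  bot_mem' := recombinator_empty hp1

lemma detailed_balance_of_recombinator_eq (hI : recombinator p I = p) (g h : ∀ i, A i) :
    p g * p h = p (recomb I g h) * p (recomb Iᶜ g h) := by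
  rw [← hI]
  nth_rw 4 [← recombinator_compl]
  rw [recombinator_recomb, recombinator_recomb, recombinator, recombinator, compl_compl]
  ring

end Splitting

section Entropy

variable {p : (∀ i, A i) → ℝ} {I : Finset L}

lemma mul_log_mul_of_ne_zero {a b c : ℝ} (h : a ≠ 0 → b ≠ 0 ∧ c ≠ 0) :
    a * log (b * c) = a * log b + a * log c := by
  rcases eq_or_ne a 0 with rfl | ha
  · simp
  · rw [log_mul (h ha).1 (h ha).2, mul_add]

lemma marginalOn_ne_zero (hp : ∀ g, 0 ≤ p g) {x : ∀ i, A i} (hx : p x ≠ 0) :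
    marginalOn p I x ≠ 0 :=
  (((hp x).lt_of_ne' hx).trans_le (le_marginalOn hp)).ne'

lemma recombinator_nonneg (hp : ∀ g, 0 ≤ p g) (x : ∀ i, A i) : 0 ≤ recombinator p I x :=
  mul_nonneg ((hp x).trans (le_marginalOn hp)) ((hp x).trans (le_marginalOn hp))

/-- Both sides equal `∑ p log π_I p + ∑ p log π_{Iᶜ} p`. -/
lemma sum_mul_log_recombinator (hp : ∀ g, 0 ≤ p g) (hp1 : ∑ g, p g = 1) :
    ∑ x, p x * log (recombinator p I x) =
      ∑ x, recombinator p I x * log (recombinator p I x) := by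
  have hsplit (g h : ∀ i, A i) :
      p g * p h * log (recombinator p I (recomb I g h)) =
        p g * log (marginalOn p I g) * p h + p g * (p h * log (marginalOn p Iᶜ h)) := by
    rw [recombinator_recomb, mul_log_mul_of_ne_zero fun hgh => ?_]
    · ring
    · obtain ⟨hg, hh⟩ := mul_ne_zero_iff.1 hgh
      exact ⟨marginalOn_ne_zero hp hg, marginalOn_ne_zero hp hh⟩
  calc ∑ x, p x * log (recombinator p I x)
      = ∑ x, p x * log (marginalOn p I x) + ∑ x, p x * log (marginalOn p Iᶜ x) := by
        rw [← Finset.sum_add_distrib]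
        refine Finset.sum_congr rfl fun x _ => mul_log_mul_of_ne_zero fun hx => ?_
        exact ⟨marginalOn_ne_zero hp hx, marginalOn_ne_zero hp hx⟩
    _ = ∑ g, ∑ h, p g * p h * log (recombinator p I (recomb I g h)) := by
        simp only [hsplit, Finset.sum_add_distrib, ← Finset.mul_sum, ← Finset.sum_mul, hp1,
          mul_one, one_mul]
    _ = ∑ x, recombinator p I x * log (recombinator p I x) := by
        rw [← sum_mul_recombinator fun x => log (recombinator p I x)]
        simp only [mul_comm]

lemma entropy_le_entropy_recombinator (hp : ∀ g, 0 ≤ p g) (hp1 : ∑ g, p g = 1) :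
    entropy p ≤ entropy (recombinator p I) ∧
      (entropy (recombinator p I) = entropy p → recombinator p I = p) := by
  have hentropy (f : (∀ i, A i) → ℝ) : entropy f = -∑ x, f x * log (f x) := by
    simp [entropy, negMulLog, Finset.sum_neg_distrib]
  have hRp (x : ∀ i, A i) (hx : recombinator p I x = 0) : p x = 0 := by
    by_contra h
    exact mul_ne_zero (marginalOn_ne_zero hp h) (marginalOn_ne_zero hp h) hx
  obtain ⟨hle, heq⟩ := sum_mul_log_le_sum_mul_log hp (recombinator_nonneg hp) hRp
    (by rw [sum_recombinator, hp1, one_pow])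
  rw [sum_mul_log_recombinator hp hp1] at hle heq
  refine ⟨by rw [hentropy, hentropy]; linarith, fun h => (heq ?_).symm⟩
  rw [hentropy, hentropy] at h
  linarith

end Entropy

section Equilibrium

variable {p : (∀ i, A i) → ℝ} {c : Finset L → ℝ}

lemma sum_sum_mul_ite_eq_recomb (I : Finset L) (x : ∀ i, A i) :
    ∑ g, ∑ h, p g * p h * (if x = recomb I g h then 1 else 0) = recombinator p I x := by
  rw [← sum_mul_recombinator fun y => if x = y then 1 else 0, Finset.sum_boole_mul,
    if_pos (mem_univ x)]

lemma recF_eq (x : ∀ i, A i) :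
    recF c p x = 1 / 2 * ∑ I, c I * (recombinator p I x - (∑ g, p g) * p x) := by
  have hinner (I : Finset L) :
      ∑ g, ∑ h, p g * p h * ((if x = recomb I g h then 1 else 0) +
        (if x = recomb Iᶜ g h then 1 else 0) - (if x = g then 1 else 0) -
          (if x = h then 1 else 0)) =
        2 * (recombinator p I x - (∑ g, p g) * p x) := by
    simp only [mul_add, mul_sub, Finset.sum_add_distrib, Finset.sum_sub_distrib,
      sum_sum_mul_ite_eq_recomb, recombinator_compl]
    simp only [mul_ite, mul_one, mul_zero, Finset.sum_ite_irrel, Finset.sum_const_zero,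
      Finset.sum_ite_eq, Finset.mem_univ, if_true, ← Finset.mul_sum, ← Finset.sum_mul]
    ring
  rw [recF, Finset.sum_congr rfl fun g _ => Finset.sum_comm, Finset.sum_comm]
  simp only [mul_assoc (c _), ← Finset.mul_sum, hinner]
  rw [Finset.mul_sum, Finset.mul_sum]
  refine Finset.sum_congr rfl fun I _ => by ring

lemma sum_mul_eq_sum_mul_recombinator (hp1 : ∑ g, p g = 1) (heq : recF c p = 0)
    (x : ∀ i, A i) : (∑ I, c I) * p x = ∑ I, c I * recombinator p I x := by
  have h := congrFun heq x
  rw [recF_eq, hp1, one_mul, Pi.zero_apply] at h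
  simp only [mul_sub, Finset.sum_sub_distrib, ← Finset.sum_mul] at h
  linarith

/-- By concavity, the entropy of `p`, a mixture of its recombinators, is at least their mixed
entropies, each of which is at least that of `p`. -/
lemma recombinator_eq_of_mul_eq_sum (hp : ∀ g, 0 ≤ p g) (hp1 : ∑ g, p g = 1)
    (hc : ∀ I, 0 ≤ c I) (hmix : ∀ x, (∑ I, c I) * p x = ∑ I, c I * recombinator p I x)
    {K : Finset L} (hK : 0 < c K) : recombinator p K = p := by
  have hC : 0 < ∑ I, c I := hK.trans_le (Finset.single_le_sum (fun I _ => hc I) (mem_univ K))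
  have hconcave := sum_mul_entropy_le_mul_entropy (fun I _ => hc I) hC
    (fun I _ => recombinator_nonneg hp) hmix
  have hgap (I : Finset L) : 0 ≤ c I * (entropy (recombinator p I) - entropy p) :=
    mul_nonneg (hc I) (sub_nonneg.2 (entropy_le_entropy_recombinator hp hp1).1)
  have hgapK : c K * (entropy (recombinator p K) - entropy p) ≤ 0 :=
    calc c K * (entropy (recombinator p K) - entropy p)
        ≤ ∑ I, c I * (entropy (recombinator p I) - entropy p) :=
          Finset.single_le_sum (fun I _ => hgap I) (mem_univ K)
      _ = ∑ I, c I * entropy (recombinator p I) - (∑ I, c I) * entropy p := by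
          simp only [mul_sub, Finset.sum_sub_distrib, Finset.sum_mul]
      _ ≤ 0 := sub_nonpos.2 hconcave
  refine (entropy_le_entropy_recombinator hp hp1).2 (le_antisymm ?_
    (entropy_le_entropy_recombinator hp hp1).1)
  exact sub_nonpos.1 (nonpos_of_mul_nonpos_right hgapK hK)

end Equilibrium

end Recombination

theorem equilibrium_is_detailed_balancing_general
    {L : Type} [Fintype L] [DecidableEq L]
    (A : L → Type) [∀ i, Fintype (A i)] [∀ i, DecidableEq (A i)]
    (c : Finset L → ℝ) (hc : ∀ I, 0 ≤ c I)
    (hsep : ∀ i j : L, i ≠ j →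
      0 < ∑ I ∈ univ.filter (fun I : Finset L => i ∈ I ∧ j ∉ I), c I)
    (p : (∀ i, A i) → ℝ) (hp0 : ∀ g, 0 ≤ p g) (hp1 : ∑ g : ∀ i, A i, p g = 1)
    (heq : recF c p = 0) :
    ∀ (g h : ∀ i, A i) (I : Finset L),
      p g * p h = p (recomb I g h) * p (recomb Iᶜ g h) := by
  have hsplit (K : Finset L) (hK : 0 < c K) : recombinator p K = p :=
    recombinator_eq_of_mul_eq_sum hp0 hp1 hc (sum_mul_eq_sum_mul_recombinator hp1 heq) hK
  have hall : splittingAlgebra p hp1 = ⊤ := by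
    refine BooleanSubalgebra.eq_top_of_separates fun i j hij => ?_
    obtain ⟨S, hS, hcS⟩ := Finset.exists_ne_zero_of_sum_ne_zero (hsep i j hij).ne'
    exact ⟨S, hsplit S ((hc S).lt_of_ne' hcS), (Finset.mem_filter.1 hS).2⟩
  intro g h I
  have hI : I ∈ splittingAlgebra p hp1 := hall ▸ BooleanSubalgebra.mem_top
  exact detailed_balance_of_recombinator_eq hI g h

/-- **Every equilibrium on the simplex is detailed-balancing.**
Under the standing assumption, every equilibrium `p ∈ S_𝓖` of the recombination dynamics
satisfies `p(g)·p(h) = p(g_I h_J)·p(g_J h_I)` for all gametes `g, h` and every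
recombination pattern `{I, J}` (here `J = Iᶜ`). -/
theorem equilibrium_is_detailed_balancing
    {L : Type} [Fintype L] [DecidableEq L] [Nonempty L]
    (A : L → Type) [∀ i, Fintype (A i)] [∀ i, DecidableEq (A i)]
    (hA : ∀ i, 2 ≤ Fintype.card (A i))
    (c : Finset L → ℝ) (hc : ∀ I, 0 ≤ c I) (hcsym : ∀ I, c I = c Iᶜ)
    (hsep : ∀ i j : L, i ≠ j →
      0 < ∑ I ∈ univ.filter (fun I : Finset L => i ∈ I ∧ j ∉ I), c I)
    (p : (∀ i, A i) → ℝ) (hp0 : ∀ g, 0 ≤ p g) (hp1 : ∑ g : ∀ i, A i, p g = 1)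
    (heq : recF c p = 0) :
    ∀ (g h : ∀ i, A i) (I : Finset L),
      p g * p h = p (recomb I g h) * p (recomb Iᶜ g h) :=
  equilibrium_is_detailed_balancing_general A c hc hsep p hp0 hp1 heq
end

section
/- Under the standing assumption, let p⁰ ∈ S_𝓖 have all marginals positive (p⁰ᵢ(a) > 0 for every locus i and allele a ∈ 𝓐ᵢ). Then the stoichiometric compatibility class S(p⁰) contains exactly one equilibrium of the recombination dynamics; this equilibrium has all coordinates strictly positive and is detailed-balancing (p(g)p(h) = p(g_I h_J)p(g_J h_I) for all g,h ∈ 𝓖 and {I,J} ∈ 𝓟), and S(p⁰) contains no equilibrium on the boundary of ℝ^𝓖_{≥0}. -/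
open Finset

/-- The stoichiometric subspace
`S = span { g_I h_J + g_J h_I − g − h : g,h ∈ 𝓖, {I,J} ∈ 𝓟 with c({I,J}) > 0 }`,
gametes being identified with standard basis vectors of `ℝ^𝓖`. -/
def stoichSpan {L : Type} [Fintype L] [DecidableEq L] (A : L → Type)
    [∀ i, Fintype (A i)] [∀ i, DecidableEq (A i)]
    (c : Finset L → ℝ) : Submodule ℝ ((∀ i, A i) → ℝ) :=
  Submodule.span ℝ
    { v | ∃ (g h : ∀ i, A i) (I : Finset L), 0 < c I ∧
        v = fun x => (if x = recomb I g h then (1 : ℝ) else 0)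
          + (if x = recomb Iᶜ g h then 1 else 0)
          - (if x = g then 1 else 0) - (if x = h then 1 else 0) }

/-!
A function `φ` on gametes is a conservation law if `φ (g_I h_J) + φ (g_J h_I) = φ g + φ h`
for every pattern `{I, J}` of positive rate; these are exactly the vectors orthogonal to `S`.
The identities defining a conservation law are stable under intersecting patterns, so by the
standing assumption they hold for all singleton patterns, which forces `φ` to be a sum of
one-locus functions. Hence `S(p⁰)` consists of the nonnegative vectors with the marginals and
total mass of `p⁰`; it contains the product `q` of the marginals of `p⁰`, which is
detailed-balancing and therefore an equilibrium.

Conversely, let `r ∈ S(p⁰)` be an equilibrium. Its support is closed under recombination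
with positive-rate patterns, hence with singleton patterns, and meets every allele, so `r`
is positive. Gibbs' inequality applied to the entropy production `F(r) ⬝ᵥ log r = 0` shows
that `r` is detailed-balancing, i.e. `log r` is a conservation law. Then `r - q ∈ S` is
orthogonal to `log r - log q`, and Gibbs' inequality once more gives `r = q`.
-/

section Gibbs

open Real

variable {Z : Type*} [Fintype Z]

theorem sum_mul_sub_comp_eq_zero (σ : Equiv.Perm Z) {P : Z → ℝ} (hP : ∀ z, P (σ z) = P z)
    (Φ : Z → ℝ) : ∑ z, P z * (Φ (σ z) - Φ z) = 0 := by
  simp only [mul_sub, sum_sub_distrib, sub_eq_zero]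
  conv_rhs => rw [← Equiv.sum_comp σ]
  simp only [hP]

theorem mul_log_div_le_sub {p q : ℝ} (hp : 0 < p) (hq : 0 < q) : p * log (q / p) ≤ q - p := by
  calc p * log (q / p) ≤ p * (q / p - 1) := by gcongr; exact log_le_sub_one_of_pos (by positivity)
    _ = q - p := by field_simp

theorem mul_log_div_lt_sub {p q : ℝ} (hp : 0 < p) (hq : 0 < q) (hpq : p ≠ q) :
    p * log (q / p) < q - p := by
  have hqp : q / p ≠ 1 := fun h => hpq ((div_eq_one_iff_eq hp.ne').1 h).symm
  calc p * log (q / p) < p * (q / p - 1) := by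
        gcongr; exact log_lt_sub_one_of_pos (by positivity) hqp
    _ = q - p := by field_simp

theorem sum_mul_log_div_nonpos {P Q : Z → ℝ} (hP : ∀ z, 0 < P z) (hQ : ∀ z, 0 < Q z)
    (hPQ : ∑ z, P z = ∑ z, Q z) : ∑ z, P z * log (Q z / P z) ≤ 0 := by
  calc ∑ z, P z * log (Q z / P z) ≤ ∑ z, (Q z - P z) :=
        sum_le_sum fun z _ => mul_log_div_le_sub (hP z) (hQ z)
    _ = 0 := by rw [sum_sub_distrib, hPQ, sub_self]

theorem eq_of_sum_mul_log_div_nonneg {P Q : Z → ℝ} (hP : ∀ z, 0 < P z) (hQ : ∀ z, 0 < Q z)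
    (hPQ : ∑ z, P z = ∑ z, Q z) (h : 0 ≤ ∑ z, P z * log (Q z / P z)) : P = Q := by
  by_contra hne
  obtain ⟨z, hz⟩ := Function.ne_iff.1 hne
  have hlt : ∑ z, P z * log (Q z / P z) < ∑ z, (Q z - P z) :=
    sum_lt_sum (fun z _ => mul_log_div_le_sub (hP z) (hQ z))
      ⟨z, mem_univ z, mul_log_div_lt_sub (hP z) (hQ z) hz⟩
  rw [sum_sub_distrib, hPQ, sub_self] at hlt
  linarith

end Gibbs

namespace Recombination

open Real Function Matrix

section Patterns

variable {L : Type} [Fintype L] [DecidableEq L]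

theorem singleton_of_separating {P : Finset L → Prop} (huniv : P univ)
    (hinter : ∀ I J, P I → P J → P (I ∩ J))
    (hsep : ∀ i j, i ≠ j → ∃ I, P I ∧ i ∈ I ∧ j ∉ I) (i : L) : P {i} := by
  have key : ∀ s : Finset L, ∃ I, P I ∧ i ∈ I ∧ ∀ j ∈ s, j ≠ i → j ∉ I := by
    intro s
    induction s using Finset.induction_on with
    | empty => exact ⟨univ, huniv, mem_univ i, by simp⟩
    | insert j s _ ih =>
      obtain ⟨I, hI, hiI, hsI⟩ := ih
      by_cases hji : j = i
      · exact ⟨I, hI, hiI, by simpa [hji] using hsI⟩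
      obtain ⟨J, hJ, hiJ, hjJ⟩ := hsep i j (Ne.symm hji)
      refine ⟨I ∩ J, hinter I J hI hJ, mem_inter.2 ⟨hiI, hiJ⟩, ?_⟩
      simp only [mem_insert, mem_inter, forall_eq_or_imp]
      exact ⟨fun _ h => hjJ h.2, fun k hk hki h => hsI k hk hki h.1⟩
  obtain ⟨I, hI, hiI, hsI⟩ := key univ
  convert hI
  ext j
  by_cases hji : j = i
  · simp [hji, hiI]
  · simpa [hji] using hsI j (mem_univ j) hji

def Separating (c : Finset L → ℝ) : Prop :=
  ∀ i j : L, i ≠ j → 0 < ∑ I ∈ univ.filter (fun I : Finset L => i ∈ I ∧ j ∉ I), c I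

theorem Separating.exists_pos {c : Finset L → ℝ} (hsep : Separating c) {i j : L}
    (hij : i ≠ j) : ∃ I, 0 < c I ∧ i ∈ I ∧ j ∉ I := by
  obtain ⟨I, hI, hpos⟩ := exists_lt_of_sum_lt (f := fun _ => (0 : ℝ)) (g := c)
    (by simpa using hsep i j hij)
  exact ⟨I, hpos, (mem_filter.1 hI).2⟩

theorem Separating.singleton {c : Finset L → ℝ} (hsep : Separating c) {P : Finset L → Prop}
    (huniv : P univ) (hinter : ∀ I J, P I → P J → P (I ∩ J)) (hpos : ∀ I, 0 < c I → P I)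
    (i : L) : P {i} :=
  singleton_of_separating huniv hinter
    (fun _ _ hij => (hsep.exists_pos hij).imp fun I hI => ⟨hpos I hI.1, hI.2⟩) i

end Patterns

variable {L : Type} [DecidableEq L] {A : L → Type}

theorem recomb_empty (g h : ∀ i, A i) : recomb ∅ g h = h := by
  funext i; simp [recomb]

theorem recomb_recomb_left (I J : Finset L) (g h : ∀ i, A i) :
    recomb I (recomb J g h) h = recomb (I ∩ J) g h := by
  funext i; by_cases hI : i ∈ I <;> by_cases hJ : i ∈ J <;> simp [recomb, hI, hJ]

variable [Fintype L]

theorem recomb_univ (g h : ∀ i, A i) : recomb univ g h = g := by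
  funext i; simp [recomb]

theorem recomb_compl (I : Finset L) (g h : ∀ i, A i) : recomb Iᶜ g h = recomb I h g := by
  funext i; by_cases hi : i ∈ I <;> simp [recomb, hi]

def recombPair (I : Finset L) (z : (∀ i, A i) × (∀ i, A i)) : (∀ i, A i) × (∀ i, A i) :=
  (recomb I z.1 z.2, recomb Iᶜ z.1 z.2)

theorem recombPair_involutive (I : Finset L) : Involutive (recombPair (A := A) I) := by
  rintro ⟨g, h⟩
  ext i <;> by_cases hi : i ∈ I <;> simp [recombPair, recomb, hi]

def Conserves (I : Finset L) (φ : (∀ i, A i) → ℝ) : Prop :=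
  ∀ g h : ∀ i, A i, φ (recomb I g h) + φ (recomb Iᶜ g h) = φ g + φ h

theorem conserves_univ (φ : (∀ i, A i) → ℝ) : Conserves univ φ := fun g h => by
  rw [recomb_univ, compl_univ, recomb_empty]

theorem Conserves.inter {φ : (∀ i, A i) → ℝ} {I J : Finset L} (hI : Conserves I φ)
    (hJ : Conserves J φ) : Conserves (I ∩ J) φ := by
  intro g h
  have e₁ := hI (recomb J g h) h
  have e₂ := hJ (recomb (I ∩ J)ᶜ g h) h
  have hJI : J ∩ (I ∩ J)ᶜ = Iᶜ ∩ J := by ext; simp only [mem_inter, mem_compl]; tauto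
  have hJcI : Jᶜ ∩ (I ∩ J)ᶜ = Jᶜ := by ext; simp only [mem_inter, mem_compl]; tauto
  simp only [recomb_recomb_left, hJI, hJcI] at e₁ e₂
  linear_combination e₁ + hJ g h - e₂

/-- The name refers to the linear first integral `p ↦ p ⬝ᵥ φ`: by `mem_stoichSpan_iff`, the
conservation laws are the vectors orthogonal to `S`. -/
def IsConservationLaw (c : Finset L → ℝ) (φ : (∀ i, A i) → ℝ) : Prop :=
  ∀ I, 0 < c I → Conserves I φ

theorem IsConservationLaw.sub {c : Finset L → ℝ} {φ ψ : (∀ i, A i) → ℝ}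
    (hφ : IsConservationLaw c φ) (hψ : IsConservationLaw c ψ) : IsConservationLaw c (φ - ψ) :=
  fun I hI g h => by simp only [Pi.sub_apply]; linarith [hφ I hI g h, hψ I hI g h]

theorem isConservationLaw_log_iff {c : Finset L → ℝ} {p : (∀ i, A i) → ℝ} (hp : ∀ g, 0 < p g) :
    (IsConservationLaw c fun g => log (p g)) ↔
      ∀ I, 0 < c I → ∀ g h, p g * p h = p (recomb I g h) * p (recomb Iᶜ g h) := by
  refine forall₂_congr fun I _ => forall₂_congr fun g h => ?_
  rw [← log_mul (hp _).ne' (hp _).ne', ← log_mul (hp _).ne' (hp _).ne', eq_comm]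
  exact log_injOn_pos.eq_iff (mul_pos (hp _) (hp _)) (mul_pos (hp _) (hp _))

theorem isConservationLaw_const (c : Finset L → ℝ) :
    IsConservationLaw c (fun _ : ∀ i, A i => (1 : ℝ)) :=
  fun _ _ _ _ => rfl

theorem isConservationLaw_comp_eval (c : Finset L → ℝ) (i : L) (ψ : A i → ℝ) :
    IsConservationLaw c (fun x : ∀ i, A i => ψ (x i)) := by
  intro I _ g h
  by_cases hi : i ∈ I <;> simp [recomb, hi, add_comm]

theorem recomb_singleton_recomb_insert {i : L} {K : Finset L} (hi : i ∉ K) (x w : ∀ i, A i) :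
    recomb {i} (recomb (insert i K) x w) w = update w i (x i) ∧
      recomb {i}ᶜ (recomb (insert i K) x w) w = recomb K x w := by
  constructor <;> funext j <;> by_cases hj : j = i
  · subst hj; simp [recomb]
  · simp [recomb, hj]
  · subst hj; simp [recomb, hi]
  · by_cases hjK : j ∈ K <;> simp [recomb, hj, hjK]

theorem IsConservationLaw.eq_sum_add {c : Finset L → ℝ} (hsep : Separating c)
    {φ : (∀ i, A i) → ℝ} (hφ : IsConservationLaw c φ) (w x : ∀ i, A i) :
    φ x = ∑ i, (φ (update w i (x i)) - φ w) + φ w := by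
  have hsingle : ∀ i, Conserves {i} φ :=
    hsep.singleton (conserves_univ φ) (fun _ _ => Conserves.inter) hφ
  have hK : ∀ K : Finset L, φ (recomb K x w) = ∑ i ∈ K, (φ (update w i (x i)) - φ w) + φ w := by
    intro K
    induction K using Finset.induction_on with
    | empty => simp [recomb_empty]
    | insert i K hi ih =>
      have h := hsingle i (recomb (insert i K) x w) w
      rw [(recomb_singleton_recomb_insert hi x w).1, (recomb_singleton_recomb_insert hi x w).2,
        ih] at h
      rw [sum_insert hi]
      linarith
  simpa [recomb_univ] using hK univ

theorem forall_mem_of_recomb_singleton_mem {X : Set (∀ i, A i)} (hne : X.Nonempty)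
    (hall : ∀ i a, ∃ g ∈ X, g i = a) (hX : ∀ i, ∀ g ∈ X, ∀ h ∈ X, recomb {i} g h ∈ X)
    (x : ∀ i, A i) : x ∈ X := by
  have hK : ∀ K : Finset L, ∃ g ∈ X, ∀ i ∈ K, g i = x i := by
    intro K
    induction K using Finset.induction_on with
    | empty => exact hne.imp fun g hg => ⟨hg, by simp⟩
    | insert i K hi ih =>
      obtain ⟨g, hg, hgK⟩ := ih
      obtain ⟨h, hh, hhi⟩ := hall i (x i)
      refine ⟨recomb {i} h g, hX i h hh g hg, fun j hj => ?_⟩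
      rcases mem_insert.1 hj with rfl | hjK
      · simp [recomb, hhi]
      · simp [recomb, ne_of_mem_of_not_mem hjK hi, hgK j hjK]
  obtain ⟨g, hg, hgx⟩ := hK univ
  rwa [show x = g from funext fun i => (hgx i (mem_univ i)).symm]

theorem prod_mul_prod_recomb (m : ∀ i, A i → ℝ) (I : Finset L) (g h : ∀ i, A i) :
    (∏ j, m j (g j)) * ∏ j, m j (h j) =
      (∏ j, m j (recomb I g h j)) * ∏ j, m j (recomb Iᶜ g h j) := by
  rw [← prod_mul_distrib, ← prod_mul_distrib]
  refine prod_congr rfl fun j _ => ?_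
  by_cases hj : j ∈ I <;> simp [recomb, hj, mul_comm]

variable [∀ i, Fintype (A i)] [∀ i, DecidableEq (A i)]

def reactionVector (I : Finset L) (g h : ∀ i, A i) : (∀ i, A i) → ℝ :=
  fun x => (if x = recomb I g h then (1 : ℝ) else 0)
    + (if x = recomb Iᶜ g h then 1 else 0)
    - (if x = g then 1 else 0) - (if x = h then 1 else 0)

theorem reactionVector_mem {c : Finset L → ℝ} {I : Finset L} (hI : 0 < c I) (g h : ∀ i, A i) :
    reactionVector I g h ∈ stoichSpan A c :=
  Submodule.subset_span ⟨g, h, I, hI, rfl⟩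

theorem reactionVector_dotProduct (I : Finset L) (g h : ∀ i, A i) (φ : (∀ i, A i) → ℝ) :
    reactionVector I g h ⬝ᵥ φ = φ (recomb I g h) + φ (recomb Iᶜ g h) - φ g - φ h := by
  simp [reactionVector, dotProduct, sub_mul, add_mul, sum_add_distrib, sum_sub_distrib]

theorem recF_eq_sum (c : Finset L → ℝ) (p : (∀ i, A i) → ℝ) :
    recF c p = ∑ g, ∑ h, ∑ I, (c I * p g * p h / 4) • reactionVector I g h := by
  funext x
  simp only [recF, reactionVector, Finset.sum_apply, Pi.smul_apply, smul_eq_mul, mul_sum]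
  refine sum_congr rfl fun g _ => sum_congr rfl fun h _ => sum_congr rfl fun I _ => ?_
  ring

theorem recF_dotProduct (c : Finset L → ℝ) (p φ : (∀ i, A i) → ℝ) :
    recF c p ⬝ᵥ φ = ∑ I, c I / 4 * ∑ z : (∀ i, A i) × (∀ i, A i), p z.1 * p z.2 *
      ((φ (recombPair I z).1 + φ (recombPair I z).2) - (φ z.1 + φ z.2)) := by
  simp only [recF_eq_sum, sum_dotProduct, smul_dotProduct, reactionVector_dotProduct,
    smul_eq_mul, recombPair, Fintype.sum_prod_type, mul_sum]
  rw [sum_comm_cycle]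
  refine sum_congr rfl fun I _ => sum_congr rfl fun g _ => sum_congr rfl fun h _ => ?_
  ring

theorem mem_stoichSpan_iff {c : Finset L → ℝ} {v : (∀ i, A i) → ℝ} :
    v ∈ stoichSpan A c ↔ ∀ φ, IsConservationLaw c φ → v ⬝ᵥ φ = 0 := by
  constructor
  · intro hv φ hφ
    induction hv using Submodule.span_induction with
    | mem v hv =>
      obtain ⟨g, h, I, hI, rfl⟩ := hv
      change reactionVector I g h ⬝ᵥ φ = 0
      rw [reactionVector_dotProduct, hφ I hI g h, sub_sub, sub_self]
    | zero => exact zero_dotProduct φ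
    | add v w _ _ hv hw => rw [add_dotProduct, hv, hw, add_zero]
    | smul a v _ hv => rw [smul_dotProduct, hv, smul_zero]
  · intro hv
    by_contra hnot
    obtain ⟨f, hfv, hfS⟩ := Submodule.exists_dual_map_eq_bot_of_notMem hnot inferInstance
    set φ : (∀ i, A i) → ℝ := fun x => f fun y => if x = y then 1 else 0
    have hf : ∀ w, f w = w ⬝ᵥ φ := fun w => by
      rw [LinearMap.pi_apply_eq_sum_univ f w]; rfl
    refine hfv ((hf v).trans (hv φ fun I hI g h => ?_))
    have h0 : f (reactionVector I g h) = 0 := by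
      have := Submodule.mem_map_of_mem (f := f) (reactionVector_mem (c := c) hI g h)
      rwa [hfS, Submodule.mem_bot] at this
    rw [hf, reactionVector_dotProduct] at h0
    linarith

theorem recF_eq_zero_of_detailedBalance {c : Finset L → ℝ} {p : (∀ i, A i) → ℝ}
    (hp : ∀ (g h : ∀ i, A i) (I : Finset L), p g * p h = p (recomb I g h) * p (recomb Iᶜ g h)) :
    recF c p = 0 := by
  have h : ∀ φ, recF c p ⬝ᵥ φ = 0 := fun φ => by
    rw [recF_dotProduct]
    exact sum_eq_zero fun I _ => mul_eq_zero_of_right _ <|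
      sum_mul_sub_comp_eq_zero (recombPair_involutive I).toPerm (P := fun z => p z.1 * p z.2)
        (fun z => (hp z.1 z.2 I).symm) (fun z => φ z.1 + φ z.2)
  funext x
  simpa using h (Pi.single x 1)

theorem detailedBalance_of_recF_eq_zero {c : Finset L → ℝ} {p : (∀ i, A i) → ℝ}
    (hc : ∀ I, 0 ≤ c I) (hp : ∀ g, 0 < p g) (hF : recF c p = 0) (I : Finset L) (hI : 0 < c I)
    (g h : ∀ i, A i) : p g * p h = p (recomb I g h) * p (recomb Iᶜ g h) := by
  set P : (∀ i, A i) × (∀ i, A i) → ℝ := fun z => p z.1 * p z.2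
  have hP : ∀ z, 0 < P z := fun z => mul_pos (hp _) (hp _)
  have hPσ : ∀ I, ∑ z, P z = ∑ z, P (recombPair I z) := fun I =>
    (Equiv.sum_comp (recombPair_involutive I).toPerm P).symm
  have hD : ∀ I, ∑ z, P z * log (P (recombPair I z) / P z) ≤ 0 := fun I =>
    sum_mul_log_div_nonpos hP (fun z => hP _) (hPσ I)
  -- the entropy production `recF c p ⬝ᵥ log p` vanishes at an equilibrium
  have hsum : ∑ I, c I / 4 * ∑ z, P z * log (P (recombPair I z) / P z) = 0 := by
    rw [← zero_dotProduct (fun g => log (p g)), ← hF, recF_dotProduct]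
    refine sum_congr rfl fun I _ => congrArg _ (sum_congr rfl fun z _ => ?_)
    rw [log_div (hP _).ne' (hP z).ne', log_mul (hp _).ne' (hp _).ne', log_mul (hp _).ne' (hp _).ne']
  have hDI : ∑ z, P z * log (P (recombPair I z) / P z) = 0 := by
    have := (sum_eq_zero_iff_of_nonpos fun J _ =>
      mul_nonpos_of_nonneg_of_nonpos (by linarith [hc J]) (hD J)).1 hsum I (mem_univ I)
    exact (mul_eq_zero.1 this).resolve_left (by positivity)
  exact congrFun (eq_of_sum_mul_log_div_nonneg hP (fun z => hP _) (hPσ I) hDI.ge) (g, h)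

theorem sum_mul_comp_eval (v : (∀ i, A i) → ℝ) (i : L) (ψ : A i → ℝ) :
    ∑ x, v x * ψ (x i) = ∑ a, marg v i a * ψ a := by
  simp only [marg, sum_mul, ite_mul, zero_mul]
  rw [sum_comm]
  exact sum_congr rfl fun x _ => by simp

theorem sum_marg (v : (∀ i, A i) → ℝ) (i : L) : ∑ a, marg v i a = ∑ x, v x := by
  simpa using (sum_mul_comp_eval v i fun _ => 1).symm

theorem dotProduct_sum_comp_eval_add (v : (∀ i, A i) → ℝ) (f : ∀ i, A i → ℝ) (C : ℝ) :
    v ⬝ᵥ (fun x => ∑ i, f i (x i) + C) = ∑ i, ∑ a, marg v i a * f i a + (∑ x, v x) * C := by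
  simp only [dotProduct, mul_add, sum_add_distrib, mul_sum, sum_mul]
  rw [sum_comm]
  simp only [sum_mul_comp_eval]

theorem marg_eq_of_sub_mem_stoichSpan {c : Finset L → ℝ} {v w : (∀ i, A i) → ℝ}
    (h : v - w ∈ stoichSpan A c) (i : L) (a : A i) : marg v i a = marg w i a := by
  set δ : A i → ℝ := fun b => if b = a then 1 else 0
  have := mem_stoichSpan_iff.1 h _ (isConservationLaw_comp_eval c i δ)
  rw [sub_dotProduct, sub_eq_zero, dotProduct, dotProduct, sum_mul_comp_eval v i δ,
    sum_mul_comp_eval w i δ] at this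
  simpa [δ] using this

theorem sum_eq_of_sub_mem_stoichSpan {c : Finset L → ℝ} {v w : (∀ i, A i) → ℝ}
    (h : v - w ∈ stoichSpan A c) : ∑ x, v x = ∑ x, w x := by
  have := mem_stoichSpan_iff.1 h _ (isConservationLaw_const c)
  simpa [sub_dotProduct, sub_eq_zero, dotProduct] using this

theorem sub_mem_stoichSpan_of_marg_eq {c : Finset L → ℝ} (hsep : Separating c)
    {v w : (∀ i, A i) → ℝ} (hm : ∀ i a, marg v i a = marg w i a) (hs : ∑ x, v x = ∑ x, w x) :
    v - w ∈ stoichSpan A c := by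
  refine mem_stoichSpan_iff.2 fun φ hφ => ?_
  rcases isEmpty_or_nonempty (∀ i, A i) with hG | ⟨⟨w₀⟩⟩
  · simp [dotProduct]
  set f : ∀ i, A i → ℝ := fun i a => φ (update w₀ i a) - φ w₀
  have hφ' : φ = fun x => ∑ i, f i (x i) + φ w₀ := funext (hφ.eq_sum_add hsep w₀)
  rw [sub_dotProduct, sub_eq_zero, hφ', dotProduct_sum_comp_eval_add v f,
    dotProduct_sum_comp_eval_add w f]
  simp only [hm, hs]

theorem pos_recomb_of_recF_eq_zero {c : Finset L → ℝ} {p : (∀ i, A i) → ℝ} (hc : ∀ I, 0 ≤ c I)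
    (hp : ∀ g, 0 ≤ p g) (hF : recF c p = 0) {I : Finset L} (hI : 0 < c I) {g h : ∀ i, A i}
    (hg : 0 < p g) (hh : 0 < p h) : 0 < p (recomb I g h) := by
  by_contra hx
  set x := recomb I g h
  have hx0 : p x = 0 := le_antisymm (not_lt.1 hx) (hp x)
  -- at a gamete of frequency zero the outflow vanishes, so each inflow term must vanish
  have hout : ∀ y, p y * (if x = y then (1 : ℝ) else 0) = 0 := fun y => by
    split_ifs with hy
    · rw [← hy, hx0, zero_mul]
    · rw [mul_zero]
  set T : (∀ i, A i) → (∀ i, A i) → Finset L → ℝ := fun g' h' I' => c I' * p g' * p h' *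
    ((if x = recomb I' g' h' then 1 else 0) + (if x = recomb I'ᶜ g' h' then 1 else 0))
  have hT : ∀ g' h' I', 0 ≤ T g' h' I' := fun g' h' I' =>
    mul_nonneg (mul_nonneg (mul_nonneg (hc I') (hp g')) (hp h')) (by positivity)
  have hTx : 0 < T g h I := mul_pos (mul_pos (mul_pos hI hg) hh) (by simp [x]; positivity)
  have hsum : recF c p x = 1 / 4 * ∑ g', ∑ h', ∑ I', T g' h' I' := by
    simp only [recF]
    congr 1
    refine sum_congr rfl fun g' _ => sum_congr rfl fun h' _ => sum_congr rfl fun I' _ => ?_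
    linear_combination (-(c I' * p h')) * hout g' - c I' * p g' * hout h'
  have hpos : 0 < ∑ g', ∑ h', ∑ I', T g' h' I' :=
    sum_pos' (fun _ _ => sum_nonneg fun _ _ => sum_nonneg fun _ _ => hT _ _ _)
      ⟨g, mem_univ g, sum_pos' (fun _ _ => sum_nonneg fun _ _ => hT _ _ _)
        ⟨h, mem_univ h, sum_pos' (fun _ _ => hT _ _ _) ⟨I, mem_univ I, hTx⟩⟩⟩
  have := congrFun hF x
  rw [hsum, Pi.zero_apply] at this
  linarith

theorem pos_of_recF_eq_zero {c : Finset L → ℝ} {p : (∀ i, A i) → ℝ} (hc : ∀ I, 0 ≤ c I)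
    (hsep : Separating c) (hp : ∀ g, 0 ≤ p g) (hF : recF c p = 0) (hmass : 0 < ∑ g, p g)
    (hmarg : ∀ i a, 0 < marg p i a) (g : ∀ i, A i) : 0 < p g := by
  have hrec : ∀ i g h, 0 < p g → 0 < p h → 0 < p (recomb {i} g h) := fun i =>
    hsep.singleton (P := fun I => ∀ g h, 0 < p g → 0 < p h → 0 < p (recomb I g h))
      (fun g h hg _ => by rwa [recomb_univ])
      (fun I J hI hJ g h hg hh => by rw [← recomb_recomb_left]; exact hI _ _ (hJ _ _ hg hh) hh)
      (fun I hI g h => pos_recomb_of_recF_eq_zero hc hp hF hI) i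
  refine forall_mem_of_recomb_singleton_mem (X := {g | 0 < p g}) ?_ (fun i a => ?_)
    (fun i g hg h hh => hrec i g h hg hh) g
  · obtain ⟨g, _, hg⟩ := exists_lt_of_sum_lt (f := fun _ => (0 : ℝ)) (by simpa using hmass)
    exact ⟨g, hg⟩
  · obtain ⟨g, _, hg⟩ := exists_lt_of_sum_lt (f := fun _ => (0 : ℝ)) (by simpa [marg] using hmarg i a)
    by_cases hga : g i = a
    · exact ⟨g, by simpa [hga] using hg, hga⟩
    · simp [hga] at hg

theorem eq_of_isConservationLaw_log {c : Finset L → ℝ} {p q : (∀ i, A i) → ℝ}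
    (hp : ∀ g, 0 < p g) (hq : ∀ g, 0 < q g) (hpq : p - q ∈ stoichSpan A c)
    (hlp : IsConservationLaw c fun g => log (p g)) (hlq : IsConservationLaw c fun g => log (q g)) :
    p = q := by
  have hs := sum_eq_of_sub_mem_stoichSpan hpq
  have h0 := mem_stoichSpan_iff.1 hpq _ (hlp.sub hlq)
  have hsplit : ∑ g, p g * log (q g / p g) + ∑ g, q g * log (p g / q g) = -((p - q) ⬝ᵥ
      ((fun g => log (p g)) - fun g => log (q g))) := by
    simp only [dotProduct, ← sum_add_distrib, ← sum_neg_distrib, Pi.sub_apply]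
    refine sum_congr rfl fun g _ => ?_
    rw [log_div (hq g).ne' (hp g).ne', log_div (hp g).ne' (hq g).ne']
    ring
  rw [h0, neg_zero] at hsplit
  have hqp := sum_mul_log_div_nonpos hq hp hs.symm
  exact eq_of_sum_mul_log_div_nonneg hp hq hs (by linarith)

theorem marg_prod (m : ∀ i, A i → ℝ) (hm : ∀ i, ∑ a, m i a = 1) (i : L) (a : A i) :
    marg (fun x => ∏ j, m j (x j)) i a = m i a := by
  set m' := update m i fun b => if b = a then m i b else 0
  have hm' : ∀ j ∈ univ.erase i, m' j = m j := fun j hj => update_of_ne (ne_of_mem_erase hj) _ _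
  have hx : ∀ x : ∀ i, A i, (if x i = a then ∏ j, m j (x j) else 0) = ∏ j, m' j (x j) := by
    intro x
    have e : ∏ j ∈ univ.erase i, m' j (x j) = ∏ j ∈ univ.erase i, m j (x j) :=
      prod_congr rfl fun j hj => by rw [hm' j hj]
    rw [← mul_prod_erase univ (fun j => m' j (x j)) (mem_univ i),
      ← mul_prod_erase univ (fun j => m j (x j)) (mem_univ i), e]
    split_ifs with h <;> simp [m', h]
  simp only [marg, hx, ← Fintype.prod_sum]
  have e : ∏ j ∈ univ.erase i, ∑ b, m' j b = 1 :=
    prod_eq_one fun j hj => by rw [hm' j hj, hm]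
  rw [← mul_prod_erase univ _ (mem_univ i), e]
  simp [m']

end Recombination

open Recombination in
theorem unique_positive_equilibrium_in_stoichiometric_class_general
    {L : Type} [Fintype L] [DecidableEq L]
    (A : L → Type) [∀ i, Fintype (A i)] [∀ i, DecidableEq (A i)]
    (c : Finset L → ℝ) (hc : ∀ I, 0 ≤ c I)
    (hsep : ∀ i j : L, i ≠ j →
      0 < ∑ I ∈ univ.filter (fun I : Finset L => i ∈ I ∧ j ∉ I), c I)
    (p₀ : (∀ i, A i) → ℝ) (hp1 : ∑ g : ∀ i, A i, p₀ g = 1)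
    (hm : ∀ (i : L) (a : A i), 0 < marg p₀ i a) :
    (∃ q : (∀ i, A i) → ℝ,
      ((∀ g, 0 ≤ q g) ∧ q - p₀ ∈ stoichSpan A c ∧ recF c q = 0) ∧
      (∀ g, 0 < q g) ∧
      (∀ (g h : ∀ i, A i) (I : Finset L),
        q g * q h = q (recomb I g h) * q (recomb Iᶜ g h)) ∧
      (∀ r : (∀ i, A i) → ℝ, (∀ g, 0 ≤ r g) → r - p₀ ∈ stoichSpan A c →
        recF c r = 0 → r = q)) ∧
    (∀ r : (∀ i, A i) → ℝ, (∀ g, 0 ≤ r g) → r - p₀ ∈ stoichSpan A c →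
      (∃ g, r g = 0) → recF c r ≠ 0) := by
  have hmarg_sum : ∀ i, ∑ a, marg p₀ i a = 1 := fun i => by rw [sum_marg, hp1]
  set q : (∀ i, A i) → ℝ := fun x => ∏ i, marg p₀ i (x i)
  have hq : ∀ g, 0 < q g := fun g => prod_pos fun i _ => hm i (g i)
  have hqDB : ∀ g h I, q g * q h = q (recomb I g h) * q (recomb Iᶜ g h) :=
    fun g h I => prod_mul_prod_recomb _ I g h
  have hqS : q - p₀ ∈ stoichSpan A c := sub_mem_stoichSpan_of_marg_eq hsep
    (marg_prod _ hmarg_sum) (by rw [← Fintype.prod_sum, prod_congr rfl fun i _ => hmarg_sum i,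
      prod_const_one, hp1])
  have hpos : ∀ r, (∀ g, 0 ≤ r g) → r - p₀ ∈ stoichSpan A c → recF c r = 0 → ∀ g, 0 < r g :=
    fun r hr hrS hF => pos_of_recF_eq_zero hc hsep hr hF
      (by rw [sum_eq_of_sub_mem_stoichSpan hrS, hp1]; exact one_pos)
      (fun i a => marg_eq_of_sub_mem_stoichSpan hrS i a ▸ hm i a)
  refine ⟨⟨q, ⟨fun g => (hq g).le, hqS, recF_eq_zero_of_detailedBalance hqDB⟩, hq, hqDB,
    fun r hr hrS hF => ?_⟩, fun r hr hrS ⟨g, hg⟩ hF => (hpos r hr hrS hF g).ne' hg⟩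
  have hr' := hpos r hr hrS hF
  exact eq_of_isConservationLaw_log hr' hq (by simpa using sub_mem hrS hqS)
    ((isConservationLaw_log_iff hr').2 (detailedBalance_of_recF_eq_zero hc hr' hF))
    ((isConservationLaw_log_iff hq).2 fun I _ g h => hqDB g h I)

/-- **Unique positive detailed-balancing equilibrium in the stoichiometric class
(Proposition 2).** Under the standing assumption, if `p⁰ ∈ S_𝓖` has all marginals
positive, then the stoichiometric compatibility class `S(p⁰) = (p⁰ + S) ∩ ℝ^𝓖₊` contains
exactly one equilibrium of the recombination dynamics; it is strictly positive and
detailed-balancing, and `S(p⁰)` contains no equilibrium on the boundary of `ℝ^𝓖₊`. -/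
theorem unique_positive_equilibrium_in_stoichiometric_class
    {L : Type} [Fintype L] [DecidableEq L] [Nonempty L]
    (A : L → Type) [∀ i, Fintype (A i)] [∀ i, DecidableEq (A i)]
    (hA : ∀ i, 2 ≤ Fintype.card (A i))
    (c : Finset L → ℝ) (hc : ∀ I, 0 ≤ c I) (hcsym : ∀ I, c I = c Iᶜ)
    (hsep : ∀ i j : L, i ≠ j →
      0 < ∑ I ∈ univ.filter (fun I : Finset L => i ∈ I ∧ j ∉ I), c I)
    (p₀ : (∀ i, A i) → ℝ) (hp0 : ∀ g, 0 ≤ p₀ g) (hp1 : ∑ g : ∀ i, A i, p₀ g = 1)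
    (hm : ∀ (i : L) (a : A i), 0 < marg p₀ i a) :
    (∃ q : (∀ i, A i) → ℝ,
      ((∀ g, 0 ≤ q g) ∧ q - p₀ ∈ stoichSpan A c ∧ recF c q = 0) ∧
      (∀ g, 0 < q g) ∧
      (∀ (g h : ∀ i, A i) (I : Finset L),
        q g * q h = q (recomb I g h) * q (recomb Iᶜ g h)) ∧
      (∀ r : (∀ i, A i) → ℝ, (∀ g, 0 ≤ r g) → r - p₀ ∈ stoichSpan A c →
        recF c r = 0 → r = q)) ∧
    (∀ r : (∀ i, A i) → ℝ, (∀ g, 0 ≤ r g) → r - p₀ ∈ stoichSpan A c →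
      (∃ g, r g = 0) → recF c r ≠ 0) :=
  unique_positive_equilibrium_in_stoichiometric_class_general A c hc hsep p₀ hp1 hm
end

section
/- Under the standing assumption, let 𝓢₀ ⊆ 𝓖 be a set of gametes such that every allele is contained in some gamete of 𝓢₀ (for every locus i and every a ∈ 𝓐ᵢ there exists g ∈ 𝓢₀ with gᵢ = a). Let T be the smallest subset of 𝓖 containing 𝓢₀ and closed under recombination: if g, h ∈ T and {I,J} ∈ 𝓟 with c({I,J}) > 0, then g_I h_J ∈ T. Then T = 𝓖, i.e., every gamete is reachable from 𝓢₀. -/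
open Finset

/-- `Reach c S₀` is the smallest set of gametes containing `S₀` and closed under
recombination: if `g, h` are reachable and `{I, Iᶜ}` is a pattern with `c(I) > 0`,
then `g_I h_{Iᶜ}` is reachable. -/
inductive Reach {L : Type} [DecidableEq L] {A : L → Type}
    (c : Finset L → ℝ) (S₀ : Set (∀ i, A i)) : (∀ i, A i) → Prop
  | base (g : ∀ i, A i) (hg : g ∈ S₀) : Reach c S₀ g
  | step (g h : ∀ i, A i) (I : Finset L) (hI : 0 < c I)
      (hg : Reach c S₀ g) (hh : Reach c S₀ h) : Reach c S₀ (recomb I g h)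

/-- **Reachability of all gametes (Lemma 2).**
Under the standing assumption (every pair of distinct loci gets separated by patterns of
positive total rate), if every allele is contained in some gamete of `S₀`, then the
smallest set of gametes containing `S₀` and closed under recombination with positive rate
constants is the set of all gametes. -/
theorem all_gametes_reachable
    {L : Type} [Fintype L] [DecidableEq L] [Nonempty L]
    (A : L → Type) [∀ i, Fintype (A i)] [∀ i, DecidableEq (A i)]
    (hA : ∀ i, 2 ≤ Fintype.card (A i))
    (c : Finset L → ℝ) (hc : ∀ I, 0 ≤ c I) (hcsym : ∀ I, c I = c Iᶜ)
    (hsep : ∀ i j : L, i ≠ j →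
      0 < ∑ I ∈ univ.filter (fun I : Finset L => i ∈ I ∧ j ∉ I), c I)
    (S₀ : Set (∀ i, A i)) (hall : ∀ (i : L) (a : A i), ∃ g ∈ S₀, g i = a) :
    { g : ∀ i, A i | Reach c S₀ g } = Set.univ := by
  -- Main claim: for every finite set `S` of loci and every target gamete `g`,
  -- there is a reachable gamete agreeing with `g` on `S`.
  have key : ∀ n : ℕ, ∀ S : Finset L, S.card = n → ∀ g : ∀ i, A i,
      ∃ h, Reach c S₀ h ∧ ∀ i ∈ S, h i = g i := by
    intro n
    induction n using Nat.strong_induction_on with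
    | _ n ih =>
      intro S hS g
      rcases le_or_gt S.card 1 with h1 | h1
      · -- small case
        rcases S.eq_empty_or_nonempty with rfl | ⟨i, hi⟩
        · obtain ⟨i⟩ := ‹Nonempty L›
          have hA' : Nonempty (A i) := Fintype.card_pos_iff.mp (by have := hA i; omega)
          obtain ⟨a⟩ := hA'
          obtain ⟨h, hh, _⟩ := hall i a
          exact ⟨h, Reach.base h hh, fun j hj => absurd hj (Finset.notMem_empty j)⟩
        · obtain ⟨h, hh, hhi⟩ := hall i (g i)
          refine ⟨h, Reach.base h hh, fun j hj => ?_⟩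
          have : j = i := by
            by_contra hji
            have := Finset.one_lt_card.mpr ⟨j, hj, i, hi, hji⟩
            omega
          subst this; exact hhi
      · -- |S| ≥ 2: pick two distinct loci in S
        obtain ⟨i, hi, j, hj, hij⟩ := Finset.one_lt_card.mp h1
        -- a separating pattern with positive rate
        have hpos := hsep i j hij
        have hex : ∃ I ∈ univ.filter (fun I : Finset L => i ∈ I ∧ j ∉ I), 0 < c I := by
          by_contra hne
          push_neg at hne
          have : ∑ I ∈ univ.filter (fun I : Finset L => i ∈ I ∧ j ∉ I), c I = 0 :=
            Finset.sum_eq_zero fun I hI => le_antisymm (hne I hI) (hc I)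
          rw [this] at hpos; exact lt_irrefl _ hpos
        obtain ⟨I, hIm, hcI⟩ := hex
        simp only [Finset.mem_filter, Finset.mem_univ, true_and] at hIm
        obtain ⟨hiI, hjI⟩ := hIm
        -- induction on the two parts
        have hlt1 : (S ∩ I).card < n := by
          have : (S ∩ I) ⊂ S := by
            refine Finset.ssubset_iff_of_subset (Finset.inter_subset_left) |>.mpr ?_
            exact ⟨j, hj, fun hjm => hjI (Finset.mem_inter.mp hjm).2⟩
          have := Finset.card_lt_card this
          omega
        have hlt2 : (S \ I).card < n := by
          have : (S \ I) ⊂ S := by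
            refine Finset.ssubset_iff_of_subset (Finset.sdiff_subset) |>.mpr ?_
            exact ⟨i, hi, fun him => (Finset.mem_sdiff.mp him).2 hiI⟩
          have := Finset.card_lt_card this
          omega
        obtain ⟨h₁, hr₁, hm₁⟩ := ih _ hlt1 (S ∩ I) rfl g
        obtain ⟨h₂, hr₂, hm₂⟩ := ih _ hlt2 (S \ I) rfl g
        refine ⟨recomb I h₁ h₂, Reach.step h₁ h₂ I hcI hr₁ hr₂, fun k hk => ?_⟩
        unfold recomb
        by_cases hkI : k ∈ I
        · simp only [hkI, if_true]
          exact hm₁ k (Finset.mem_inter.mpr ⟨hk, hkI⟩)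
        · simp only [hkI, if_false]
          exact hm₂ k (Finset.mem_sdiff.mpr ⟨hk, hkI⟩)
  ext g
  simp only [Set.mem_setOf_eq, Set.mem_univ, iff_true]
  obtain ⟨h, hr, hm⟩ := key _ Finset.univ rfl g
  have : h = g := funext fun i => hm i (Finset.mem_univ i)
  exact this ▸ hr
end

section
/- Under the standing assumption, the stoichiometric subspace S = span_ℝ{g_I h_J + g_J h_I − g − h : g,h ∈ 𝓖, {I,J} ∈ 𝓟 with c({I,J}) > 0} has dimension dim S = ∏_{i ∈ 𝓛} Aᵢ − 1 − Σ_{i ∈ 𝓛} (Aᵢ − 1); equivalently, its orthogonal complement in ℝ^𝓖 has dimension 1 + Σ_{i ∈ 𝓛} (Aᵢ − 1). -/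
open Finset

/-
For the standard dot product on `ℝ^𝓖`, a function `f : 𝓖 → ℝ` is orthogonal to `S` iff
`f (g_I h_J) + f (g_J h_I) = f g + f h` for every pattern of positive rate. Fix a gamete `r`.
Since the patterns of positive rate separate any two loci, such an `f` is additive,
`f x = a + ∑ᵢ φᵢ (xᵢ)`: if `g` differs from `r` at two loci, a separating pattern splits `g`
into `g_I r_J` and `g_J r_I`, both closer to `r` in Hamming distance. Conversely every additive
function is orthogonal to `S`. Normalising `φᵢ (rᵢ) = 0` parametrises the additive functions
injectively by `ℝ × ∏ᵢ ℝ^(𝓐ᵢ ∖ {rᵢ})`, so `dim S^⊥ = 1 + ∑ᵢ (Aᵢ - 1)`.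
-/

open Module

section DotProduct

variable {K ι : Type*} [Field K] [Fintype ι]

theorem nondegenerate_dotProductBilin :
    (dotProductBilin K K : LinearMap.BilinForm K (ι → K)).Nondegenerate := by
  classical
  refine ⟨fun v hv => funext fun i => ?_, fun v hv => funext fun i => ?_⟩ <;>
    simpa using hv (Pi.single i 1)

theorem finrank_add_finrank_eq_card_of_forall_dotProduct {S W : Submodule K (ι → K)}
    (hW : ∀ f, f ∈ W ↔ ∀ v ∈ S, v ⬝ᵥ f = 0) :
    finrank K S + finrank K W = Fintype.card ι := by
  have hWS : W = LinearMap.BilinForm.orthogonal (dotProductBilin K K) S := by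
    ext f
    simp [hW]
  have hS := Submodule.finrank_le S
  rw [finrank_fintype_fun_eq_card] at hS
  rw [hWS, LinearMap.BilinForm.finrank_orthogonal nondegenerate_dotProductBilin,
    finrank_fintype_fun_eq_card]
  omega

end DotProduct

section AdditiveFunctions

variable (K : Type*) [Field K] {L : Type*} [Fintype L] {A : L → Type*} [∀ i, DecidableEq (A i)]

def additiveFun (r : ∀ i, A i) : K × (∀ i, {a // a ≠ r i} → K) →ₗ[K] ((∀ i, A i) → K) where
  toFun p x := p.1 + ∑ i, if h : x i = r i then 0 else p.2 i ⟨x i, h⟩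
  map_add' p q := by
    funext x
    simp only [Prod.fst_add, Prod.snd_add, Pi.add_apply]
    rw [add_add_add_comm, ← sum_add_distrib]
    congr 2 with i
    split_ifs <;> simp
  map_smul' t p := by
    funext x
    simp only [Prod.smul_fst, Prod.smul_snd, Pi.smul_apply, smul_eq_mul, RingHom.id_apply,
      mul_add, mul_sum]
    congr 2 with i
    split_ifs <;> simp

theorem additiveFun_apply (r : ∀ i, A i) (p : K × (∀ i, {a // a ≠ r i} → K)) (x : ∀ i, A i) :
    additiveFun K r p x = p.1 + ∑ i, if h : x i = r i then 0 else p.2 i ⟨x i, h⟩ :=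
  rfl

variable [DecidableEq L]

theorem additiveFun_injective (r : ∀ i, A i) : Function.Injective (additiveFun K r) := by
  refine (injective_iff_map_eq_zero _).2 fun p hp => ?_
  have hp₁ : p.1 = 0 := by simpa [additiveFun_apply] using congrFun hp r
  refine Prod.ext hp₁ (funext fun i => funext fun b => ?_)
  have := congrFun hp (Function.update r i b)
  rw [additiveFun_apply, hp₁, zero_add, sum_eq_single i] at this
  · simpa [b.2] using this
  · intro j _ hji
    simp [Function.update_of_ne hji]
  · simp

theorem mem_range_additiveFun_of_eq {r : ∀ i, A i} {f : (∀ i, A i) → K}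
    (hf : ∀ g, f g = f r + ∑ i, (f (Function.update r i (g i)) - f r)) :
    f ∈ LinearMap.range (additiveFun K r) := by
  refine ⟨(f r, fun i b => f (Function.update r i b) - f r), funext fun g => ?_⟩
  rw [additiveFun_apply, hf g]
  congr 1
  refine sum_congr rfl fun i _ => ?_
  split_ifs with h
  · simp [h]
  · rfl

theorem finrank_range_additiveFun [∀ i, Fintype (A i)] (r : ∀ i, A i) :
    finrank K (LinearMap.range (additiveFun K r)) = 1 + ∑ i, (Fintype.card (A i) - 1) := by
  rw [LinearMap.finrank_range_of_inj (additiveFun_injective K r), finrank_prod, finrank_self,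
    finrank_pi_fintype]
  simp [Fintype.card_subtype_compl]

end AdditiveFunctions

section Recombination

variable {L : Type} [Fintype L] [DecidableEq L] {A : L → Type}

theorem sum_recomb_add_sum_recomb_compl {M : Type*} [AddCommMonoid M] (ψ : ∀ i, A i → M)
    (I : Finset L) (g h : ∀ i, A i) :
    ∑ i, ψ i (recomb I g h i) + ∑ i, ψ i (recomb Iᶜ g h i)
      = ∑ i, ψ i (g i) + ∑ i, ψ i (h i) := by
  simp only [← sum_add_distrib]
  refine sum_congr rfl fun i _ => ?_
  by_cases hi : i ∈ I <;> simp [recomb, hi, add_comm]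

variable [∀ i, DecidableEq (A i)]

theorem additiveFun_recomb_add_recomb_compl {K : Type*} [Field K] (r : ∀ i, A i)
    (p : K × (∀ i, {a // a ≠ r i} → K)) (I : Finset L) (g h : ∀ i, A i) :
    additiveFun K r p (recomb I g h) + additiveFun K r p (recomb Iᶜ g h)
      = additiveFun K r p g + additiveFun K r p h := by
  simp only [additiveFun_apply]
  rw [add_add_add_comm, sum_recomb_add_sum_recomb_compl
    (fun i b => if h : b = r i then 0 else p.2 i ⟨b, h⟩) I g h, add_add_add_comm]

theorem hammingDist_recomb_lt {I : Finset L} {g h : ∀ i, A i} {j : L} (hj : g j ≠ h j)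
    (hjI : j ∉ I) : hammingDist (recomb I g h) h < hammingDist g h := by
  refine card_lt_card ((ssubset_iff_of_subset fun i => ?_).2 ⟨j, ?_, ?_⟩)
  · by_cases hi : i ∈ I <;> simp [recomb, hi]
  · simpa using hj
  · simp [recomb, hjI]

theorem eq_zero_of_recomb_of_update {M : Type*} [AddMonoid M] {d : (∀ i, A i) → M} {r : ∀ i, A i} {C : Set (Finset L)}
    (hC : ∀ i j, i ≠ j → ∃ I ∈ C, i ∈ I ∧ j ∉ I)
    (hd : ∀ g, ∀ I ∈ C, d (recomb I g r) + d (recomb Iᶜ g r) = d g + d r)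
    (hr : d r = 0) (hupdate : ∀ i a, d (Function.update r i a) = 0) (g : ∀ i, A i) :
    d g = 0 := by
  induction hn : hammingDist g r using Nat.strong_induction_on generalizing g with
  | _ n ih =>
  by_cases hpair : ∃ i j, i ≠ j ∧ g i ≠ r i ∧ g j ≠ r j
  · obtain ⟨i, j, hij, hi, hj⟩ := hpair
    obtain ⟨I, hIC, hiI, hjI⟩ := hC i j hij
    have h₁ := ih _ (hn ▸ hammingDist_recomb_lt hj hjI) _ rfl
    have h₂ := ih _ (hn ▸ hammingDist_recomb_lt hi (notMem_compl.2 hiI)) _ rfl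
    simpa [h₁, h₂, hr] using (hd g I hIC).symm
  · push Not at hpair
    by_cases hgr : ∃ i, g i ≠ r i
    · obtain ⟨i, hi⟩ := hgr
      have : g = Function.update r i (g i) :=
        Function.eq_update_iff.2 ⟨rfl, fun j hji => by_contra fun hj => hi (hpair j i hji hj)⟩
      rw [this, hupdate]
    · push Not at hgr
      rw [funext hgr, hr]

theorem eq_add_sum_update_sub_of_recomb {M : Type*} [AddCommGroup M] {f : (∀ i, A i) → M} {r : ∀ i, A i}
    {C : Set (Finset L)} (hC : ∀ i j, i ≠ j → ∃ I ∈ C, i ∈ I ∧ j ∉ I)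
    (hf : ∀ g, ∀ I ∈ C, f (recomb I g r) + f (recomb Iᶜ g r) = f g + f r) (g : ∀ i, A i) :
    f g = f r + ∑ i, (f (Function.update r i (g i)) - f r) := by
  set ψ : ∀ i, A i → M := fun i a => f (Function.update r i a) - f r
  have hψr : ∑ i, ψ i (r i) = 0 := by simp [ψ]
  have hψupdate (i : L) (a : A i) : ∑ j, ψ j (Function.update r i a j) = ψ i a := by
    refine (sum_eq_single i (fun j _ hji => ?_) (by simp)).trans (by simp)
    simp [ψ, Function.update_of_ne hji]
  have hdefect := eq_zero_of_recomb_of_update (d := fun g => f g - f r - ∑ i, ψ i (g i)) hC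
    (fun g I hI => by
      linear_combination (norm := abel) hf g I hI - sum_recomb_add_sum_recomb_compl ψ I g r)
    (by simp [hψr]) (fun i a => by simp only [hψupdate, ψ, sub_self]) g
  rwa [sub_sub, sub_eq_zero] at hdefect

variable [∀ i, Fintype (A i)]

theorem stoichSpan_generator_dotProduct (f : (∀ i, A i) → ℝ) (I : Finset L) (g h : ∀ i, A i) :
    (fun x => (if x = recomb I g h then (1 : ℝ) else 0) + (if x = recomb Iᶜ g h then 1 else 0)
        - (if x = g then 1 else 0) - (if x = h then 1 else 0)) ⬝ᵥ f
      = f (recomb I g h) + f (recomb Iᶜ g h) - f g - f h := by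
  simp [dotProduct, sub_mul, add_mul, sum_add_distrib, sum_sub_distrib]

theorem forall_mem_stoichSpan_dotProduct_eq_zero_iff {c : Finset L → ℝ} {f : (∀ i, A i) → ℝ} :
    (∀ v ∈ stoichSpan A c, v ⬝ᵥ f = 0) ↔
      ∀ g h I, 0 < c I → f (recomb I g h) + f (recomb Iᶜ g h) = f g + f h := by
  constructor
  · intro hf g h I hI
    have := hf _ (Submodule.subset_span ⟨g, h, I, hI, rfl⟩)
    rw [stoichSpan_generator_dotProduct] at this
    linarith
  · intro hf v hv
    induction hv using Submodule.span_induction with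
    | mem v hv =>
      obtain ⟨g, h, I, hI, rfl⟩ := hv
      rw [stoichSpan_generator_dotProduct]
      linarith [hf g h I hI]
    | zero => simp
    | add v w _ _ hv hw => simp [add_dotProduct, hv, hw]
    | smul t v _ hv => simp [smul_dotProduct, hv]

end Recombination

theorem stoichiometric_subspace_dimension_general
    {L : Type} [Fintype L] [DecidableEq L]
    (A : L → Type) [∀ i, Fintype (A i)] [∀ i, DecidableEq (A i)]
    (hA : ∀ i, 2 ≤ Fintype.card (A i))
    (c : Finset L → ℝ)
    (hsep : ∀ i j : L, i ≠ j →
      0 < ∑ I ∈ univ.filter (fun I : Finset L => i ∈ I ∧ j ∉ I), c I) :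
    Module.finrank ℝ (stoichSpan A c)
        = ∏ i : L, Fintype.card (A i) - (1 + ∑ i : L, (Fintype.card (A i) - 1)) ∧
    Module.finrank ℝ (stoichSpan A c) + (1 + ∑ i : L, (Fintype.card (A i) - 1))
        = ∏ i : L, Fintype.card (A i) := by
  have (i : L) : Nonempty (A i) := Fintype.card_pos_iff.1 (by linarith [hA i])
  let r : ∀ i, A i := fun i => Classical.arbitrary (A i)
  have hC (i j : L) (hij : i ≠ j) : ∃ I ∈ {I | 0 < c I}, i ∈ I ∧ j ∉ I := by
    obtain ⟨I, hI, hcI⟩ := exists_lt_of_sum_lt (f := fun _ => 0) (g := c)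
      (by rw [sum_const_zero]; exact hsep i j hij)
    exact ⟨I, hcI, (mem_filter.1 hI).2⟩
  have hW (f : (∀ i, A i) → ℝ) :
      f ∈ LinearMap.range (additiveFun ℝ r) ↔ ∀ v ∈ stoichSpan A c, v ⬝ᵥ f = 0 := by
    rw [forall_mem_stoichSpan_dotProduct_eq_zero_iff]
    refine ⟨?_, fun hf => mem_range_additiveFun_of_eq ℝ
      (eq_add_sum_update_sub_of_recomb hC fun g I hI => hf g r I hI)⟩
    rintro ⟨p, rfl⟩ g h I -
    exact additiveFun_recomb_add_recomb_compl r p I g h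
  have hdim := finrank_add_finrank_eq_card_of_forall_dotProduct hW
  rw [finrank_range_additiveFun, Fintype.card_pi] at hdim
  omega

/-- **Dimension of the stoichiometric subspace (Corollary 3).**
Under the standing assumption, the stoichiometric subspace `S` has dimension
`dim S = ∏ᵢ Aᵢ − 1 − Σᵢ (Aᵢ − 1)`; equivalently, its orthogonal complement in `ℝ^𝓖`
has dimension `1 + Σᵢ (Aᵢ − 1)`. -/
theorem stoichiometric_subspace_dimension
    {L : Type} [Fintype L] [DecidableEq L] [Nonempty L]
    (A : L → Type) [∀ i, Fintype (A i)] [∀ i, DecidableEq (A i)]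
    (hA : ∀ i, 2 ≤ Fintype.card (A i))
    (c : Finset L → ℝ) (hc : ∀ I, 0 ≤ c I) (hcsym : ∀ I, c I = c Iᶜ)
    (hsep : ∀ i j : L, i ≠ j →
      0 < ∑ I ∈ univ.filter (fun I : Finset L => i ∈ I ∧ j ∉ I), c I) :
    Module.finrank ℝ (stoichSpan A c)
        = ∏ i : L, Fintype.card (A i) - (1 + ∑ i : L, (Fintype.card (A i) - 1)) ∧
    Module.finrank ℝ (stoichSpan A c) + (1 + ∑ i : L, (Fintype.card (A i) - 1))
        = ∏ i : L, Fintype.card (A i) :=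
  stoichiometric_subspace_dimension_general A hA c hsep
end

section
/- Under the standing assumption, the stoichiometric compatibility classes coincide with the marginal compatibility classes: for every p ∈ ℝ^𝓖_{≥0}, S(p) = M(p). -/
open Finset

set_option linter.unusedSectionVars false
set_option maxHeartbeats 1000000

section Aux

variable {L : Type} [Fintype L] [DecidableEq L] {A : L → Type}
  [∀ i, Fintype (A i)] [∀ i, DecidableEq (A i)]

def bas (g : ∀ i, A i) : (∀ i, A i) → ℝ := fun x => if x = g then 1 else 0

def sig (E : Finset L) (g h : ∀ i, A i) : ∀ i, A i := fun i => if i ∈ E then h i else g i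

def Dset (g h : ∀ i, A i) : Finset L := univ.filter (fun i => g i ≠ h i)

def sVec (E : Finset L) (g h : ∀ i, A i) : (∀ i, A i) → ℝ :=
  bas (sig E g h) + bas (sig E h g) - bas g - bas h

lemma Dset_comm (g h : ∀ i, A i) : Dset g h = Dset h g := by
  simp [Dset, ne_comm]

lemma notMem_Dset {g h : ∀ i, A i} {i : L} (hi : i ∉ Dset g h) : g i = h i := by
  by_contra hne
  exact hi (by simp [Dset, hne])

lemma sig_self (E : Finset L) (g : ∀ i, A i) : sig E g g = g := by
  funext i; by_cases h : i ∈ E <;> simp [sig, h]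

lemma sig_empty (g h : ∀ i, A i) : sig ∅ g h = g := by
  funext i; simp [sig]

lemma sig_inter (E : Finset L) (g h : ∀ i, A i) :
    sig (E ∩ Dset g h) g h = sig E g h := by
  funext i
  by_cases hE : i ∈ E
  · by_cases hD : i ∈ Dset g h
    · simp [sig, hE, hD]
    · simp [sig, hE, hD, notMem_Dset hD]
  · simp [sig, hE]

lemma sig_full (g h : ∀ i, A i) : sig (Dset g h) g h = h := by
  funext i
  by_cases hD : i ∈ Dset g h
  · simp [sig, hD]
  · simp [sig, hD, notMem_Dset hD]

lemma sig_sdiff (E : Finset L) (g h : ∀ i, A i) :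
    sig (Dset g h \ E) g h = sig E h g := by
  funext i
  by_cases hE : i ∈ E
  · simp [sig, hE, Finset.mem_sdiff]
  · by_cases hD : i ∈ Dset g h
    · simp [sig, hE, hD, Finset.mem_sdiff]
    · simp [sig, hE, hD, Finset.mem_sdiff, notMem_Dset hD]

lemma sig_union (P Q : Finset L) (g h : ∀ i, A i) :
    sig Q (sig P g h) h = sig (P ∪ Q) g h := by
  funext i
  by_cases hQ : i ∈ Q
  · simp [sig, hQ]
  · by_cases hP : i ∈ P <;> simp [sig, hQ, hP]

lemma sig_disj {P Q : Finset L} (hPQ : Disjoint P Q) (g h : ∀ i, A i) :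
    sig Q h (sig P g h) = sig Q h g := by
  funext i
  by_cases hQ : i ∈ Q
  · have hP : i ∉ P := Finset.disjoint_right.mp hPQ hQ
    simp [sig, hQ, hP]
  · simp [sig, hQ]

lemma sVec_inter (E : Finset L) (g h : ∀ i, A i) :
    sVec (E ∩ Dset g h) g h = sVec E g h := by
  unfold sVec
  rw [sig_inter, show E ∩ Dset g h = E ∩ Dset h g by rw [Dset_comm], sig_inter]

lemma sVec_empty (g h : ∀ i, A i) : sVec ∅ g h = 0 := by
  unfold sVec
  rw [sig_empty, sig_empty]
  abel

lemma sVec_full (g h : ∀ i, A i) : sVec (Dset g h) g h = 0 := by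
  unfold sVec
  rw [sig_full, show Dset g h = Dset h g from Dset_comm g h, sig_full]
  abel

lemma sVec_sdiff (E : Finset L) (g h : ∀ i, A i) :
    sVec (Dset g h \ E) g h = sVec E g h := by
  unfold sVec
  rw [sig_sdiff, show Dset g h \ E = Dset h g \ E by rw [Dset_comm], sig_sdiff]
  abel

lemma Dset_sig_left (P : Finset L) (g h : ∀ i, A i) :
    Dset (sig P g h) h = Dset g h \ P := by
  ext i
  by_cases hP : i ∈ P <;> simp [Dset, sig, hP]

lemma Dset_sig_right (P : Finset L) (g h : ∀ i, A i) :
    Dset g (sig P h g) = Dset g h \ P := by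
  ext i
  by_cases hP : i ∈ P <;> simp [Dset, sig, hP]

lemma sVec_split_mem (S : Submodule ℝ ((∀ i, A i) → ℝ)) {P Q : Finset L}
    (hPQ : Disjoint P Q) (g h : ∀ i, A i)
    (h1 : sVec Q (sig P g h) h ∈ S) (h2 : sVec Q g (sig P h g) ∈ S)
    (h3 : sVec P (sig Q g h) h ∈ S) (h4 : sVec P g (sig Q h g) ∈ S) :
    sVec (P ∪ Q) g h ∈ S := by
  have key : sVec Q (sig P g h) h + sVec Q g (sig P h g)
      + sVec P (sig Q g h) h + sVec P g (sig Q h g)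
      = (2 : ℝ) • sVec (P ∪ Q) g h := by
    unfold sVec
    rw [sig_union P Q g h, sig_disj hPQ g h, sig_disj hPQ h g, sig_union P Q h g,
      sig_union Q P g h, sig_disj hPQ.symm g h, sig_disj hPQ.symm h g, sig_union Q P h g,
      Finset.union_comm Q P]
    module
  have hm := S.add_mem (S.add_mem (S.add_mem h1 h2) h3) h4
  rw [key] at hm
  have := S.smul_mem ((2 : ℝ)⁻¹) hm
  rwa [smul_smul, inv_mul_cancel₀ two_ne_zero, one_smul] at this

lemma sVec_gen_mem (c : Finset L → ℝ) {I : Finset L} (hI : 0 < c I) (g h : ∀ i, A i) :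
    sVec Iᶜ g h ∈ stoichSpan A c := by
  have hmem : (fun x => (if x = recomb I g h then (1 : ℝ) else 0)
      + (if x = recomb Iᶜ g h then 1 else 0)
      - (if x = g then 1 else 0) - (if x = h then 1 else 0)) ∈ stoichSpan A c :=
    Submodule.subset_span ⟨g, h, I, hI, rfl⟩
  have h1 : recomb I g h = sig Iᶜ g h := by
    funext i
    by_cases hiI : i ∈ I <;> simp [recomb, sig, hiI]
  have h2 : recomb Iᶜ g h = sig Iᶜ h g := rfl
  have heq : sVec Iᶜ g h = (fun x => (if x = recomb I g h then (1 : ℝ) else 0)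
      + (if x = recomb Iᶜ g h then 1 else 0)
      - (if x = g then 1 else 0) - (if x = h then 1 else 0)) := by
    funext x
    simp only [sVec, bas, Pi.add_apply, Pi.sub_apply, h1, h2]
  rwa [heq]

/-- Main lemma: every swap vector lies in the stoichiometric span. -/
lemma swap_mem (c : Finset L → ℝ) (hc : ∀ I, 0 ≤ c I)
    (hsep : ∀ i j : L, i ≠ j →
      0 < ∑ I ∈ univ.filter (fun I : Finset L => i ∈ I ∧ j ∉ I), c I) :
    ∀ (n : ℕ) (g h : ∀ i, A i), (Dset g h).card ≤ n →
      ∀ E : Finset L, sVec E g h ∈ stoichSpan A c := by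
  intro n
  induction n with
  | zero =>
    intro g h hcard E
    have hD : Dset g h = ∅ := Finset.card_eq_zero.mp (Nat.le_zero.mp hcard)
    have hgh : g = h := by
      funext i
      exact notMem_Dset (by rw [hD]; exact Finset.notMem_empty i)
    subst hgh
    have : sVec E g g = 0 := by
      unfold sVec
      rw [sig_self]
      abel
    rw [this]; exact Submodule.zero_mem _
  | succ n ih =>
    -- helper: the split case, for E ⊆ Dset g h with 2 ≤ E.card
    have split : ∀ g h : ∀ i, A i, (Dset g h).card ≤ n + 1 →
        ∀ E : Finset L, E ⊆ Dset g h → 2 ≤ E.card → sVec E g h ∈ stoichSpan A c := by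
      intro g h hcard E hEsub hE2
      obtain ⟨k, hk⟩ : E.Nonempty := Finset.card_pos.mp (by omega)
      have hkD : k ∈ Dset g h := hEsub hk
      set Q := E.erase k with hQ
      have hQsub : Q ⊆ Dset g h := (Finset.erase_subset k E).trans hEsub
      have hQcard : 1 ≤ Q.card := by
        rw [hQ, Finset.card_erase_of_mem hk]; omega
      have hPQ : Disjoint {k} Q := by
        simp [hQ, Finset.disjoint_singleton_left]
      have hunion : {k} ∪ Q = E := by
        rw [← Finset.insert_eq, hQ, Finset.insert_erase hk]
      have hcard1 : (Dset g h \ ({k} : Finset L)).card ≤ n := by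
        rw [Finset.card_sdiff_of_subset (by simpa using hkD)]
        simp only [Finset.card_singleton]
        omega
      have hcardQ : (Dset g h \ Q).card ≤ n := by
        rw [Finset.card_sdiff_of_subset hQsub]
        omega
      have t1 : sVec Q (sig {k} g h) h ∈ stoichSpan A c := by
        apply ih
        rw [Dset_sig_left]; exact hcard1
      have t2 : sVec Q g (sig {k} h g) ∈ stoichSpan A c := by
        apply ih
        rw [Dset_sig_right]; exact hcard1
      have t3 : sVec {k} (sig Q g h) h ∈ stoichSpan A c := by
        apply ih
        rw [Dset_sig_left]; exact hcardQ
      have t4 : sVec {k} g (sig Q h g) ∈ stoichSpan A c := by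
        apply ih
        rw [Dset_sig_right]; exact hcardQ
      have := sVec_split_mem (stoichSpan A c) hPQ g h t1 t2 t3 t4
      rwa [hunion] at this
    intro g h hcard E
    rw [← sVec_inter]
    set E' := E ∩ Dset g h with hE'
    have hE'sub : E' ⊆ Dset g h := Finset.inter_subset_right
    rcases Nat.lt_or_ge E'.card 2 with hlt | hge
    · -- card E' ≤ 1
      rcases Nat.lt_or_ge E'.card 1 with h0 | h1
      · have : E' = ∅ := Finset.card_eq_zero.mp (by omega)
        rw [this, sVec_empty]; exact Submodule.zero_mem _
      · -- card E' = 1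
        have hcardE' : E'.card = 1 := by omega
        obtain ⟨k, hk⟩ := Finset.card_eq_one.mp hcardE'
        rcases Nat.lt_or_ge (Dset g h \ E').card 2 with hD2 | hD2
        · -- |D| ≤ 2
          rcases Nat.lt_or_ge (Dset g h \ E').card 1 with hD0 | hD1
          · -- E' = Dset g h
            have hdiff : Dset g h \ E' = ∅ := Finset.card_eq_zero.mp (by omega)
            have : Dset g h = E' := by
              apply Finset.Subset.antisymm _ hE'sub
              intro i hi
              by_contra hiE
              exact (Finset.notMem_empty i) (hdiff ▸ Finset.mem_sdiff.mpr ⟨hi, hiE⟩)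
            rw [← this, sVec_full]; exact Submodule.zero_mem _
          · -- |Dset g h| = 2 : base case, use a separating pattern
            have hDcard : (Dset g h).card = 2 := by
              have := Finset.card_sdiff_of_subset hE'sub
              omega
            have hkD : k ∈ Dset g h := hE'sub (hk ▸ Finset.mem_singleton_self k)
            obtain ⟨j, hj⟩ := Finset.card_eq_one.mp
              (by rw [Finset.card_erase_of_mem hkD, hDcard] : ((Dset g h).erase k).card = 1)
            have hjD : j ∈ Dset g h := by
              have : j ∈ (Dset g h).erase k := hj ▸ Finset.mem_singleton_self j
              exact Finset.mem_of_mem_erase this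
            have hjk : j ≠ k := by
              have : j ∈ (Dset g h).erase k := hj ▸ Finset.mem_singleton_self j
              exact Finset.ne_of_mem_erase this
            -- get an active pattern I with k ∈ I, j ∉ I
            obtain ⟨I, hImem, hIpos⟩ :
                ∃ I ∈ univ.filter (fun I : Finset L => k ∈ I ∧ j ∉ I), 0 < c I := by
              by_contra hcon
              push_neg at hcon
              have : ∑ I ∈ univ.filter (fun I : Finset L => k ∈ I ∧ j ∉ I), c I ≤ 0 :=
                Finset.sum_nonpos (fun I hI => le_of_not_gt (fun hp => absurd hp
                  (not_lt.mpr (hcon I hI))))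
              exact absurd (hsep k j (Ne.symm hjk)) (not_lt.mpr this)
            rw [Finset.mem_filter] at hImem
            obtain ⟨-, hkI, hjI⟩ := hImem
            have hbase := sVec_gen_mem c hIpos g h
            -- show sVec Iᶜ g h = sVec E' g h
            have hIc : Iᶜ ∩ Dset g h = Dset g h \ E' := by
              ext i
              simp only [Finset.mem_inter, Finset.mem_compl, Finset.mem_sdiff, hk,
                Finset.mem_singleton]
              constructor
              · rintro ⟨hiI, hiD⟩
                refine ⟨hiD, fun hik => hiI (hik ▸ hkI)⟩
              · rintro ⟨hiD, hik⟩
                refine ⟨fun hiI => ?_, hiD⟩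
                -- i ∈ Dset g h, i ≠ k, so i = j (card 2), but j ∉ I
                have : i ∈ (Dset g h).erase k := Finset.mem_erase.mpr ⟨hik, hiD⟩
                rw [hj, Finset.mem_singleton] at this
                exact hjI (this ▸ hiI)
            rw [← sVec_sdiff E' g h, ← hIc, sVec_inter]
            exact hbase
        · -- |Dset g h \ E'| ≥ 2 : use complement and split
          rw [← sVec_sdiff]
          exact split g h hcard _ (Finset.sdiff_subset) hD2
    · exact split g h hcard E' hE'sub hge

lemma sum_ite_point (i : L) (a : A i) (w : ∀ j, A j) :
    ∑ g : ∀ j, A j, (if g i = a then (if g = w then (1:ℝ) else 0) else 0)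
      = if w i = a then 1 else 0 := by
  have h : ∀ g : ∀ j, A j, (if g i = a then (if g = w then (1:ℝ) else 0) else 0)
      = if g = w then (if w i = a then (1:ℝ) else 0) else 0 := by
    intro g
    by_cases hg : g = w
    · subst hg; by_cases h2 : g i = a <;> simp [h2]
    · by_cases h2 : g i = a <;> simp [hg, h2]
  rw [Finset.sum_congr rfl (fun g _ => h g), Finset.sum_ite_eq' Finset.univ w
    (fun _ => if w i = a then (1:ℝ) else 0), if_pos (Finset.mem_univ w)]

lemma span_marg_zero (c : Finset L → ℝ) {v : (∀ i, A i) → ℝ} (hv : v ∈ stoichSpan A c)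
    (i : L) (a : A i) : ∑ g : ∀ j, A j, (if g i = a then v g else 0) = 0 := by
  induction hv using Submodule.span_induction with
  | mem x hx =>
    obtain ⟨g0, h0, I, hI, rfl⟩ := hx
    have hsplit : ∀ g : ∀ j, A j,
        (if g i = a then ((if g = recomb I g0 h0 then (1:ℝ) else 0)
          + (if g = recomb Iᶜ g0 h0 then 1 else 0)
          - (if g = g0 then 1 else 0) - (if g = h0 then 1 else 0)) else 0)
        = (if g i = a then (if g = recomb I g0 h0 then (1:ℝ) else 0) else 0)
          + (if g i = a then (if g = recomb Iᶜ g0 h0 then (1:ℝ) else 0) else 0)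
          - (if g i = a then (if g = g0 then (1:ℝ) else 0) else 0)
          - (if g i = a then (if g = h0 then (1:ℝ) else 0) else 0) := by
      intro g; by_cases hg : g i = a <;> simp [hg]
    rw [Finset.sum_congr rfl (fun g _ => hsplit g)]
    rw [Finset.sum_sub_distrib, Finset.sum_sub_distrib, Finset.sum_add_distrib]
    rw [sum_ite_point, sum_ite_point, sum_ite_point, sum_ite_point]
    by_cases hiI : i ∈ I
    · have e1 : recomb I g0 h0 i = g0 i := by simp [recomb, hiI]
      have e2 : recomb Iᶜ g0 h0 i = h0 i := by simp [recomb, hiI]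
      rw [e1, e2]; ring
    · have e1 : recomb I g0 h0 i = h0 i := by simp [recomb, hiI]
      have e2 : recomb Iᶜ g0 h0 i = g0 i := by simp [recomb, hiI]
      rw [e1, e2]; ring
  | zero => simp
  | add x y hx hy ihx ihy =>
    have hsp : ∀ g : ∀ j, A j, (if g i = a then (x + y) g else 0)
        = (if g i = a then x g else 0) + (if g i = a then y g else 0) := by
      intro g; by_cases hg : g i = a <;> simp [hg]
    rw [Finset.sum_congr rfl (fun g _ => hsp g), Finset.sum_add_distrib, ihx, ihy, add_zero]
  | smul r x hx ihx =>
    have hsp : ∀ g : ∀ j, A j, (if g i = a then (r • x) g else 0)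
        = r * (if g i = a then x g else 0) := by
      intro g; by_cases hg : g i = a <;> simp [hg]
    rw [Finset.sum_congr rfl (fun g _ => hsp g), ← Finset.mul_sum, ihx, mul_zero]

lemma fiber_sum (k : L) (f : (∀ i, A i) → ℝ) (F : A k → ((∀ i, A i) → ℝ)) :
    ∑ g : ∀ i, A i, f g • F (g k)
      = ∑ a : A k, (∑ g : ∀ i, A i, if g k = a then f g else 0) • F a := by
  have h1 : ∀ a : A k, (∑ g : ∀ i, A i, if g k = a then f g else 0) • F a
      = ∑ g : ∀ i, A i, (if g k = a then f g • F (g k) else 0) := by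
    intro a
    rw [Finset.sum_smul]
    refine Finset.sum_congr rfl (fun g _ => ?_)
    by_cases hg : g k = a
    · rw [if_pos hg, if_pos hg, hg]
    · rw [if_neg hg, if_neg hg, zero_smul]
  rw [Finset.sum_congr rfl (fun a _ => h1 a), Finset.sum_comm]
  refine Finset.sum_congr rfl (fun g _ => ?_)
  rw [Finset.sum_ite_eq Finset.univ (g k) (fun _ => f g • F (g k)), if_pos (Finset.mem_univ _)]

lemma bas_decomp (c : Finset L → ℝ) (hc : ∀ I, 0 ≤ c I)
    (hsep : ∀ i j : L, i ≠ j →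
      0 < ∑ I ∈ univ.filter (fun I : Finset L => i ∈ I ∧ j ∉ I), c I)
    (gstar : ∀ i, A i) :
    ∀ (n : ℕ) (g : ∀ i, A i), (Dset g gstar).card ≤ n →
      bas g - bas gstar - ∑ k : L, (bas (Function.update gstar k (g k)) - bas gstar)
        ∈ stoichSpan A c := by
  intro n
  induction n with
  | zero =>
    intro g hcard
    have hD : Dset g gstar = ∅ := Finset.card_eq_zero.mp (Nat.le_zero.mp hcard)
    have hg : g = gstar := by
      funext i
      exact notMem_Dset (by rw [hD]; exact Finset.notMem_empty i)
    subst hg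
    have : ∀ k : L, bas (Function.update g k (g k)) - bas g = 0 := by
      intro k; rw [Function.update_eq_self]; abel
    rw [Finset.sum_congr rfl (fun k _ => this k), Finset.sum_const_zero]
    have : bas g - bas g - 0 = 0 := by abel
    rw [this]; exact Submodule.zero_mem _
  | succ n ih =>
    intro g hcard
    rcases Nat.lt_or_ge (Dset g gstar).card (n + 1) with hlt | hge
    · exact ih g (by omega)
    · have hne : (Dset g gstar).Nonempty := Finset.card_pos.mp (by omega)
      obtain ⟨k, hk⟩ := hne
      set g' := sig {k} g gstar with hg'
      have hcard' : (Dset g' gstar).card ≤ n := by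
        rw [hg', Dset_sig_left, Finset.card_sdiff_of_subset (by simpa using hk)]
        simp only [Finset.card_singleton]
        omega
      have ihg' := ih g' hcard'
      have hswap : sVec {k} g gstar ∈ stoichSpan A c :=
        swap_mem c hc hsep (Dset g gstar).card g gstar le_rfl {k}
      -- identities
      have hupd : sig {k} gstar g = Function.update gstar k (g k) := by
        funext i
        by_cases hik : i = k
        · subst hik; simp [sig, Function.update_self]
        · simp [sig, hik, Function.update_of_ne hik]
      have hsum : (∑ k' : L, (bas (Function.update gstar k' (g k')) - bas gstar))
          = (∑ k' : L, (bas (Function.update gstar k' (g' k')) - bas gstar))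
            + (bas (Function.update gstar k (g k)) - bas gstar) := by
        have hterm : ∀ k' ∈ (Finset.univ : Finset L),
            (bas (Function.update gstar k' (g k')) - bas gstar)
            = (bas (Function.update gstar k' (g' k')) - bas gstar)
              + (if k' = k then (bas (Function.update gstar k (g k)) - bas gstar) else 0) := by
          intro k' _
          by_cases hk' : k' = k
          · subst hk'
            have hgk : g' k' = gstar k' := by simp [hg', sig]
            rw [hgk, Function.update_eq_self, if_pos rfl]
            abel
          · have hgk : g' k' = g k' := by simp [hg', sig, hk']
            rw [hgk, if_neg hk', add_zero]
        rw [Finset.sum_congr rfl hterm, Finset.sum_add_distrib,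
          Finset.sum_ite_eq' Finset.univ k
            (fun _ => bas (Function.update gstar k (g k)) - bas gstar),
          if_pos (Finset.mem_univ k)]
      have hkey : bas g - bas gstar
            - ∑ k' : L, (bas (Function.update gstar k' (g k')) - bas gstar)
          = (bas g' - bas gstar
            - ∑ k' : L, (bas (Function.update gstar k' (g' k')) - bas gstar))
            - sVec {k} g gstar := by
        rw [hsum]
        unfold sVec
        rw [← hg', hupd]
        abel
      rw [hkey]
      exact Submodule.sub_mem _ ihg' hswap

end Aux

/-- **Stoichiometric and marginal compatibility classes coincide (Corollary 3).**
Under the standing assumption, for every nonnegative `p`, the stoichiometric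
compatibility class `S(p) = (p + S) ∩ ℝ^𝓖₊` equals the marginal compatibility class
`M(p) = {p' ≥ 0 : p'ᵢ(a) = pᵢ(a) for all loci i and alleles a}`. -/
theorem stoichiometric_eq_marginal_classes
    {L : Type} [Fintype L] [DecidableEq L] [Nonempty L]
    (A : L → Type) [∀ i, Fintype (A i)] [∀ i, DecidableEq (A i)]
    (hA : ∀ i, 2 ≤ Fintype.card (A i))
    (c : Finset L → ℝ) (hc : ∀ I, 0 ≤ c I) (hcsym : ∀ I, c I = c Iᶜ)
    (hsep : ∀ i j : L, i ≠ j →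
      0 < ∑ I ∈ univ.filter (fun I : Finset L => i ∈ I ∧ j ∉ I), c I)
    (p : (∀ i, A i) → ℝ) (hp0 : ∀ g, 0 ≤ p g) :
    { q : (∀ i, A i) → ℝ | (∀ g, 0 ≤ q g) ∧ q - p ∈ stoichSpan A c }
      = { q : (∀ i, A i) → ℝ |
          (∀ g, 0 ≤ q g) ∧ ∀ (i : L) (a : A i), marg q i a = marg p i a } := by
  have margdiff : ∀ (q : (∀ i, A i) → ℝ) (i : L) (a : A i),
      marg q i a - marg p i a = ∑ g : ∀ j, A j, (if g i = a then (q - p) g else 0) := by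
    intro q i a
    unfold marg
    rw [← Finset.sum_sub_distrib]
    refine Finset.sum_congr rfl (fun g _ => ?_)
    by_cases hg : g i = a <;> simp [hg]
  ext q
  simp only [Set.mem_setOf_eq]
  constructor
  · rintro ⟨hq0, hspan⟩
    refine ⟨hq0, fun i a => ?_⟩
    have h0 := span_marg_zero c hspan i a
    have := (margdiff q i a).trans h0
    linarith
  · rintro ⟨hq0, hmarg⟩
    refine ⟨hq0, ?_⟩
    set v := q - p with hv
    have hvzero : ∀ (i : L) (a : A i), ∑ g : ∀ j, A j, (if g i = a then v g else 0) = 0 := by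
      intro i a
      rw [← margdiff q i a, hmarg i a, sub_self]
    have i0 : L := Classical.arbitrary L
    have htot : ∑ g : ∀ j, A j, v g = 0 := by
      have hexp : ∑ g : ∀ j, A j, v g
          = ∑ a : A i0, ∑ g : ∀ j, A j, (if g i0 = a then v g else 0) := by
        rw [Finset.sum_comm]
        refine Finset.sum_congr rfl (fun g _ => ?_)
        rw [Finset.sum_ite_eq Finset.univ (g i0) (fun _ => v g), if_pos (Finset.mem_univ _)]
      rw [hexp]
      exact Finset.sum_eq_zero (fun a _ => hvzero i0 a)
    have hnon : ∀ i, Nonempty (A i) := fun i =>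
      Fintype.card_pos_iff.mp (by have := hA i; omega)
    let gstar : ∀ i, A i := fun i => (hnon i).some
    have hw : ∀ g : ∀ i, A i,
        bas g - bas gstar - ∑ k : L, (bas (Function.update gstar k (g k)) - bas gstar)
          ∈ stoichSpan A c := fun g =>
      bas_decomp c hc hsep gstar (Dset g gstar).card g le_rfl
    have hbasis : v = ∑ g : ∀ i, A i, v g • bas g := by
      funext x
      rw [Finset.sum_apply]
      have : ∀ g : ∀ i, A i, (v g • bas g) x = if x = g then v g else 0 := by
        intro g
        by_cases hg : x = g
        · subst hg; simp [bas]
        · simp [bas, hg]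
      rw [Finset.sum_congr rfl (fun g _ => this g),
        Finset.sum_ite_eq Finset.univ x (fun g => v g), if_pos (Finset.mem_univ x)]
    have key : v = ∑ g : ∀ i, A i, v g •
        (bas g - bas gstar - ∑ k : L, (bas (Function.update gstar k (g k)) - bas gstar)) := by
      have step1 : ∑ g : ∀ i, A i, v g •
          (bas g - bas gstar - ∑ k : L, (bas (Function.update gstar k (g k)) - bas gstar))
          = (∑ g : ∀ i, A i, v g • bas g) - (∑ g : ∀ i, A i, v g • bas gstar)
            - ∑ g : ∀ i, A i, v g • ∑ k : L, (bas (Function.update gstar k (g k)) - bas gstar) := by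
        rw [← Finset.sum_sub_distrib, ← Finset.sum_sub_distrib]
        refine Finset.sum_congr rfl (fun g _ => ?_)
        rw [smul_sub, smul_sub]
      have step2 : (∑ g : ∀ i, A i, v g • bas gstar) = (∑ g : ∀ i, A i, v g) • bas gstar :=
        (Finset.sum_smul).symm
      have step3 : ∑ g : ∀ i, A i, v g • ∑ k : L,
            (bas (Function.update gstar k (g k)) - bas gstar)
          = ∑ k : L, ∑ a : A k, (∑ g : ∀ i, A i, if g k = a then v g else 0) •
              (bas (Function.update gstar k a) - bas gstar) := by
        have e1 : ∀ g : ∀ i, A i, v g • ∑ k : L,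
              (bas (Function.update gstar k (g k)) - bas gstar)
            = ∑ k : L, v g • (bas (Function.update gstar k (g k)) - bas gstar) := by
          intro g; rw [Finset.smul_sum]
        rw [Finset.sum_congr rfl (fun g _ => e1 g), Finset.sum_comm]
        refine Finset.sum_congr rfl (fun k _ => ?_)
        exact fiber_sum k v (fun a => bas (Function.update gstar k a) - bas gstar)
      rw [step1, step2, step3, htot, zero_smul, sub_zero, ← hbasis]
      have : ∀ k : L, ∑ a : A k, (∑ g : ∀ i, A i, if g k = a then v g else 0) •
          (bas (Function.update gstar k a) - bas gstar) = 0 := by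
        intro k
        exact Finset.sum_eq_zero (fun a _ => by rw [hvzero k a, zero_smul])
      rw [Finset.sum_congr rfl (fun k _ => this k), Finset.sum_const_zero, sub_zero]
    rw [key]
    exact Submodule.sum_mem _ (fun g _ => Submodule.smul_mem _ _ (hw g))
end
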